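/- arXiv:2108.06879 — 10 statements merged into one kernel-verified Lean document; each statement's English description precedes it below -/
import Mathlib

section
/- Under the PC-lite dynamics, let B ⊆ V with |B| > 1 be a connected subset of agents that is completely isolated from outside, i.e., for every i ∈ B and every time t ≥ 0, ∑_{j ∈ V∖B} w_ij(t) = 0. If for some time t₀ we have x_i(t₀) > 0 for all i ∈ B, then lim_{t→∞} x_i(t) = 1 for all i ∈ B. -/
open Filter Finset

/-- Under the PC-lite dynamics, a connected subset `B` (|B| > 1) that is
completely isolated from outside, whose members all hold positive opinions at some time `t₀`,
has all its members' opinions converge to 1. -/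
theorem pc_lite_isolated_polarization {n : ℕ} (hn : 2 ≤ n)
    (x : ℕ → Fin n → ℝ) (w : ℕ → Fin n → Fin n → ℝ)
    (hx : ∀ t i, x t i ∈ Set.Icc (-1 : ℝ) 1)
    (hw0 : ∀ t i j, 0 ≤ w t i j)
    (hwdiag : ∀ t i, w t i i = 0)
    (hwsum : ∀ t i, ∑ j, w t i j ≤ 1)
    (hdyn : ∀ t i, x (t + 1) i =
      x t i + ∑ j ∈ univ.erase i, w t i j * |x t j| * (Real.sign (x t j) - x t i))
    (B : Finset (Fin n)) (hBcard : 1 < B.card)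
    (hconn : ∀ i ∈ B,
      Tendsto (fun T => ∑ t ∈ Finset.range T, ∑ j ∈ B, w t i j) atTop atTop)
    (hiso : ∀ t, ∀ i ∈ B, ∑ j ∈ Bᶜ, w t i j = 0)
    (t₀ : ℕ) (hpos : ∀ i ∈ B, 0 < x t₀ i) :
    ∀ i ∈ B, Tendsto (fun t => x t i) atTop (nhds 1) := by
  have hne : B.Nonempty := Finset.card_pos.mp (by omega)
  set m₀ := B.inf' hne (x t₀) with hm₀def
  have hm₀ : 0 < m₀ := (Finset.lt_inf'_iff hne).mpr hpos
  have hzero : ∀ t, ∀ i ∈ B, ∀ j, j ∉ B → w t i j = 0 := by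
    intro t i hi j hj
    exact (Finset.sum_eq_zero_iff_of_nonneg (fun j _ => hw0 t i j)).mp (hiso t i hi) j
      (Finset.mem_compl.mpr hj)
  -- the step formula for agents in B when everyone in B is positive
  have hstep : ∀ t, ∀ i ∈ B, (∀ j ∈ B, 0 < x t j) →
      x (t + 1) i = x t i + (∑ j ∈ B, w t i j * x t j) * (1 - x t i) := by
    intro t i hi hp
    rw [hdyn t i]
    congr 1
    have e1 : ∑ j ∈ univ.erase i, w t i j * |x t j| * (Real.sign (x t j) - x t i)
        = ∑ j ∈ B.erase i, w t i j * |x t j| * (Real.sign (x t j) - x t i) := by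
      refine (Finset.sum_subset (Finset.erase_subset_erase i B.subset_univ) ?_).symm
      intro j hj hjB
      have hjB' : j ∉ B := by
        intro h
        exact hjB (Finset.mem_erase.mpr ⟨(Finset.mem_erase.mp hj).1, h⟩)
      simp [hzero t i hi j hjB']
    have e2 : ∑ j ∈ B.erase i, w t i j * |x t j| * (Real.sign (x t j) - x t i)
        = ∑ j ∈ B.erase i, w t i j * x t j * (1 - x t i) := by
      refine Finset.sum_congr rfl ?_
      intro j hj
      have hpj := hp j (Finset.mem_erase.mp hj).2
      rw [abs_of_pos hpj, Real.sign_of_pos hpj]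
    have e3 : ∑ j ∈ B.erase i, w t i j * x t j * (1 - x t i)
        = ∑ j ∈ B, w t i j * x t j * (1 - x t i) :=
      Finset.sum_erase B (by simp [hwdiag t i])
    rw [e1, e2, e3, Finset.sum_mul]
  -- uniform lower bound for all times ≥ t₀
  have hkey : ∀ k, ∀ i ∈ B, m₀ ≤ x (t₀ + k) i := by
    intro k
    induction k with
    | zero => intro i hi; exact Finset.inf'_le _ hi
    | succ k ih =>
      intro i hi
      have hp : ∀ j ∈ B, 0 < x (t₀ + k) j := fun j hj => lt_of_lt_of_le hm₀ (ih j hj)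
      rw [show t₀ + (k + 1) = (t₀ + k) + 1 from rfl, hstep (t₀ + k) i hi hp]
      have hS : 0 ≤ ∑ j ∈ B, w (t₀ + k) i j * x (t₀ + k) j :=
        Finset.sum_nonneg fun j hj => mul_nonneg (hw0 _ _ _) (le_of_lt (hp j hj))
      have hx1 : x (t₀ + k) i ≤ 1 := (hx _ i).2
      have := mul_nonneg hS (by linarith : (0:ℝ) ≤ 1 - x (t₀ + k) i)
      linarith [ih i hi]
  -- monotonicity after t₀
  have hmono : ∀ i ∈ B, Monotone (fun k => x (t₀ + k) i) := by
    intro i hi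
    apply monotone_nat_of_le_succ
    intro k
    have hp : ∀ j ∈ B, 0 < x (t₀ + k) j := fun j hj => lt_of_lt_of_le hm₀ (hkey k j hj)
    show x (t₀ + k) i ≤ x (t₀ + (k+1)) i
    rw [show t₀ + (k + 1) = (t₀ + k) + 1 from rfl, hstep (t₀ + k) i hi hp]
    have hS : 0 ≤ ∑ j ∈ B, w (t₀ + k) i j * x (t₀ + k) j :=
      Finset.sum_nonneg fun j hj => mul_nonneg (hw0 _ _ _) (le_of_lt (hp j hj))
    have hx1 : x (t₀ + k) i ≤ 1 := (hx _ i).2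
    have := mul_nonneg hS (by linarith : (0:ℝ) ≤ 1 - x (t₀ + k) i)
    linarith
  intro i hi
  have hbdd : BddAbove (Set.range fun k => x (t₀ + k) i) := by
    refine ⟨1, ?_⟩
    rintro y ⟨k, rfl⟩
    exact (hx _ i).2
  set L := ⨆ k, x (t₀ + k) i with hLdef
  have htend : Tendsto (fun k => x (t₀ + k) i) atTop (nhds L) :=
    tendsto_atTop_ciSup (hmono i hi) hbdd
  have hL1 : L ≤ 1 := ciSup_le fun k => (hx _ i).2
  have hLeq : L = 1 := by
    by_contra hLne
    have hL : L < 1 := lt_of_le_of_ne hL1 hLne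
    have hle : ∀ k, x (t₀ + k) i ≤ L := fun k => le_ciSup hbdd k
    -- growth estimate
    have hgrow : ∀ k, x t₀ i + m₀ * (1 - L) * (∑ t ∈ Finset.Ico t₀ (t₀ + k), ∑ j ∈ B, w t i j)
        ≤ x (t₀ + k) i := by
      intro k
      induction k with
      | zero => simp
      | succ k ih =>
        have hp : ∀ j ∈ B, 0 < x (t₀ + k) j := fun j hj => lt_of_lt_of_le hm₀ (hkey k j hj)
        have hW0 : 0 ≤ ∑ j ∈ B, w (t₀ + k) i j :=
          Finset.sum_nonneg fun j _ => hw0 _ _ _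
        have hSW : m₀ * (∑ j ∈ B, w (t₀ + k) i j)
            ≤ ∑ j ∈ B, w (t₀ + k) i j * x (t₀ + k) j := by
          rw [Finset.mul_sum]
          refine Finset.sum_le_sum fun j hj => ?_
          rw [mul_comm]
          exact mul_le_mul_of_nonneg_left (hkey k j hj) (hw0 _ _ _)
        have hS : 0 ≤ ∑ j ∈ B, w (t₀ + k) i j * x (t₀ + k) j :=
          le_trans (mul_nonneg (le_of_lt hm₀) hW0) hSW
        have h1L : (0:ℝ) ≤ 1 - L := by linarith
        have h1x : 1 - L ≤ 1 - x (t₀ + k) i := by linarith [hle k]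
        have hprod : m₀ * (∑ j ∈ B, w (t₀ + k) i j) * (1 - L)
            ≤ (∑ j ∈ B, w (t₀ + k) i j * x (t₀ + k) j) * (1 - x (t₀ + k) i) :=
          mul_le_mul hSW h1x h1L hS
        rw [show t₀ + (k + 1) = (t₀ + k) + 1 from rfl, hstep (t₀ + k) i hi hp,
          Finset.sum_Ico_succ_top (Nat.le_add_right t₀ k)]
        nlinarith [hprod, ih]
    -- the lower bound tends to atTop, contradiction with upper bound 1
    have hWsum : Tendsto (fun k => ∑ t ∈ Finset.Ico t₀ (t₀ + k), ∑ j ∈ B, w t i j)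
        atTop atTop := by
      have h1 : Tendsto (fun k => ∑ t ∈ Finset.range (t₀ + k), ∑ j ∈ B, w t i j)
          atTop atTop := by
        refine (hconn i hi).comp ?_
        exact tendsto_atTop_mono (fun k => Nat.le_add_left k t₀) tendsto_id
      have heq : ∀ k, ∑ t ∈ Finset.Ico t₀ (t₀ + k), ∑ j ∈ B, w t i j
          = (∑ t ∈ Finset.range (t₀ + k), ∑ j ∈ B, w t i j)
            - ∑ t ∈ Finset.range t₀, ∑ j ∈ B, w t i j := by
        intro k
        rw [Finset.sum_Ico_eq_sub _ (Nat.le_add_right t₀ k)]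
      simp only [heq, sub_eq_add_neg]
      exact tendsto_atTop_add_const_right atTop _ h1
    have hbig : Tendsto (fun k => x t₀ i + m₀ * (1 - L) *
        (∑ t ∈ Finset.Ico t₀ (t₀ + k), ∑ j ∈ B, w t i j)) atTop atTop := by
      have hc : 0 < m₀ * (1 - L) := mul_pos hm₀ (by linarith)
      exact tendsto_atTop_add_const_left atTop _ (Tendsto.const_mul_atTop hc hWsum)
    obtain ⟨k, hk⟩ := (hbig.eventually_gt_atTop 1).exists
    exact absurd (le_trans (hgrow k) ((hx _ i).2)) (not_le.mpr hk)
  rw [hLeq] at htend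
  have : (fun k => x (t₀ + k) i) = fun k => x (k + t₀) i := by
    funext k; rw [Nat.add_comm]
  rw [this] at htend
  exact (tendsto_add_atTop_iff_nat t₀).mp htend
end

section
/- Under the PC-lite dynamics, let B ⊆ V with |B| > 1 be a connected subset of agents with bubble number γ_B > 3 + 2√2, and let α₁ < α₂ be the two positive solutions of (1+α)/(α(1−α)) = γ_B. If for some time t₀ we have x_i(t₀) > α₁ for all i ∈ B, then liminf_{t→∞} x_i(t) ≥ α₂ for all i ∈ B. -/
set_option maxHeartbeats 1000000


open Filter Finset

/-- Under the PC-lite dynamics, if a connected subset `B` (|B| > 1) has bubble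
number `γ > 3 + 2√2` with `α₁ < α₂` the two positive solutions of `(1+α)/(α(1-α)) = γ`, and
at some time `t₀` every member's opinion exceeds `α₁`, then each member's liminf is ≥ `α₂`. -/
theorem pc_lite_bubble_polarization {n : ℕ} (hn : 2 ≤ n)
    (x : ℕ → Fin n → ℝ) (w : ℕ → Fin n → Fin n → ℝ)
    (hx : ∀ t i, x t i ∈ Set.Icc (-1 : ℝ) 1)
    (hw0 : ∀ t i j, 0 ≤ w t i j)
    (hwdiag : ∀ t i, w t i i = 0)
    (hwsum : ∀ t i, ∑ j, w t i j ≤ 1)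
    (hdyn : ∀ t i, x (t + 1) i =
      x t i + ∑ j ∈ univ.erase i, w t i j * |x t j| * (Real.sign (x t j) - x t i))
    (B : Finset (Fin n)) (hBcard : 1 < B.card)
    (hconn : ∀ i ∈ B,
      Tendsto (fun T => ∑ t ∈ Finset.range T, ∑ j ∈ B, w t i j) atTop atTop)
    (γ : ℝ) (hγ : 3 + 2 * Real.sqrt 2 < γ)
    (hbubble : ∀ t, ∀ i ∈ B, γ * ∑ j ∈ Bᶜ, w t i j ≤ ∑ j ∈ B, w t i j)
    (α₁ α₂ : ℝ) (hα₁pos : 0 < α₁) (hα₁α₂ : α₁ < α₂)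
    (hsol₁ : (1 + α₁) / (α₁ * (1 - α₁)) = γ)
    (hsol₂ : (1 + α₂) / (α₂ * (1 - α₂)) = γ)
    (t₀ : ℕ) (hinit : ∀ i ∈ B, α₁ < x t₀ i) :
    ∀ i ∈ B, α₂ ≤ Filter.liminf (fun t => x t i) atTop := by
  have hγ0 : (0:ℝ) < γ := by nlinarith [Real.sqrt_nonneg 2]
  have hα₂pos : 0 < α₂ := lt_trans hα₁pos hα₁α₂
  -- denominators are positive
  have hden : ∀ α : ℝ, 0 < α → (1 + α) / (α * (1 - α)) = γ → 0 < α * (1 - α) := by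
    intro α hαpos hsol
    by_contra h
    push_neg at h
    rcases h.lt_or_eq with h | h
    · have hneg : (1 + α) / (α * (1 - α)) < 0 := div_neg_of_pos_of_neg (by linarith) h
      rw [hsol] at hneg; linarith
    · rw [h, div_zero] at hsol; linarith
  have hd₁ := hden α₁ hα₁pos hsol₁
  have hd₂ := hden α₂ hα₂pos hsol₂
  have hα₁1 : α₁ < 1 := by nlinarith
  have hα₂1 : α₂ < 1 := by nlinarith
  have heq₁ : γ * (α₁ * (1 - α₁)) = 1 + α₁ := by
    have := (div_eq_iff hd₁.ne').mp hsol₁; linarith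
  have heq₂ : γ * (α₂ * (1 - α₂)) = 1 + α₂ := by
    have := (div_eq_iff hd₂.ne').mp hsol₂; linarith
  have hS : γ * (1 - α₁ - α₂) = 1 := by
    have h1 : (α₂ - α₁) * (γ * (1 - α₁ - α₂)) = (α₂ - α₁) * 1 := by
      linear_combination heq₂ - heq₁
    exact mul_left_cancel₀ (sub_ne_zero.mpr hα₁α₂.ne') h1
  have hProd : γ * (α₁ * α₂) = 1 := by linear_combination heq₁ - α₁ * hS
  have hfact : ∀ a : ℝ, γ * (a * (1 - a)) - (1 + a) = γ * ((a - α₁) * (α₂ - a)) := by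
    intro a; linear_combination a * hS + hProd
  have hα2γ : γ * α₂ + 1 ≤ γ := by nlinarith [heq₂]
  -- KEY one-step inequality
  have hkey : ∀ (t : ℕ) (a : ℝ), 0 < a → (∀ j ∈ B, a ≤ x t j) → ∀ i ∈ B,
      γ * x t i + (∑ j ∈ B, w t i j) * (γ * a * (1 - x t i) - (1 + x t i))
        ≤ γ * x (t + 1) i := by
    intro t a ha hB i hi
    have hxi := hx t i
    have hsum0 : w t i i * |x t i| * (Real.sign (x t i) - x t i) = 0 := by
      rw [hwdiag]; ring
    have hdyn' : x (t + 1) i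
        = x t i + ∑ j, w t i j * |x t j| * (Real.sign (x t j) - x t i) := by
      rw [hdyn t i, Finset.sum_erase (f := fun j => w t i j * |x t j| * (Real.sign (x t j) - x t i)) univ hsum0]
    have hsplit : ∑ j, w t i j * |x t j| * (Real.sign (x t j) - x t i)
        = ∑ j ∈ B, w t i j * |x t j| * (Real.sign (x t j) - x t i)
          + ∑ j ∈ Bᶜ, w t i j * |x t j| * (Real.sign (x t j) - x t i) :=
      (Finset.sum_add_sum_compl B _).symm
    have hin : a * (1 - x t i) * ∑ j ∈ B, w t i j
        ≤ ∑ j ∈ B, w t i j * |x t j| * (Real.sign (x t j) - x t i) := by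
      rw [Finset.mul_sum]
      apply Finset.sum_le_sum
      intro j hj
      have hxj := hB j hj
      have hxjpos : 0 < x t j := lt_of_lt_of_le ha hxj
      rw [Real.sign_of_pos hxjpos, abs_of_pos hxjpos]
      nlinarith [hw0 t i j, hxi.2, mul_nonneg (mul_nonneg (sub_nonneg.mpr hxj) (hw0 t i j))
        (sub_nonneg.mpr hxi.2)]
    have hout : -(1 + x t i) * ∑ j ∈ Bᶜ, w t i j
        ≤ ∑ j ∈ Bᶜ, w t i j * |x t j| * (Real.sign (x t j) - x t i) := by
      rw [Finset.mul_sum]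
      apply Finset.sum_le_sum
      intro j _
      have habs : |x t j| ≤ 1 := abs_le.mpr ⟨(hx t j).1, (hx t j).2⟩
      have habs0 : 0 ≤ |x t j| := abs_nonneg _
      rcases Real.sign_apply_eq (x t j) with h | h | h <;> rw [h]
      · nlinarith [hw0 t i j, hxi.1, hxi.2,
          mul_nonneg (mul_nonneg (sub_nonneg.mpr habs) (hw0 t i j)) (by linarith [hxi.1] : (0:ℝ) ≤ 1 + x t i)]
      · have hx0 : x t j = 0 := Real.sign_eq_zero_iff.mp h
        rw [hx0]
        simp only [abs_zero]
        nlinarith [mul_nonneg (hw0 t i j) (by linarith [hxi.1] : (0:ℝ) ≤ 1 + x t i)]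
      · nlinarith [hw0 t i j, hxi.1, hxi.2,
          mul_nonneg (mul_nonneg (hw0 t i j) habs0) (sub_nonneg.mpr hxi.2),
          mul_nonneg (hw0 t i j) (by linarith [hxi.1] : (0:ℝ) ≤ 1 + x t i)]
    have h2 : γ * (a * (1 - x t i) * ∑ j ∈ B, w t i j)
        ≤ γ * ∑ j ∈ B, w t i j * |x t j| * (Real.sign (x t j) - x t i) :=
      mul_le_mul_of_nonneg_left hin hγ0.le
    have h3 : γ * (-(1 + x t i) * ∑ j ∈ Bᶜ, w t i j)
        ≤ γ * ∑ j ∈ Bᶜ, w t i j * |x t j| * (Real.sign (x t j) - x t i) :=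
      mul_le_mul_of_nonneg_left hout hγ0.le
    have h4 : (1 + x t i) * (γ * ∑ j ∈ Bᶜ, w t i j)
        ≤ (1 + x t i) * ∑ j ∈ B, w t i j :=
      mul_le_mul_of_nonneg_left (hbubble t i hi) (by linarith [hxi.1])
    rw [hdyn', hsplit]
    set SB := ∑ j ∈ B, w t i j with hSB
    set SC := ∑ j ∈ Bᶜ, w t i j with hSC
    set FB := ∑ j ∈ B, w t i j * |x t j| * (Real.sign (x t j) - x t i) with hFB
    set FC := ∑ j ∈ Bᶜ, w t i j * |x t j| * (Real.sign (x t j) - x t i) with hFC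
    nlinarith [h2, h3, h4, hxi.1, hxi.2]

  -- persistence of a level c above the global bound a
  have hper : ∀ (t : ℕ) (a c : ℝ), 0 < a → a ≤ α₂ →
      0 ≤ γ * a * (1 - c) - (1 + c) → (∀ j ∈ B, a ≤ x t j) →
      ∀ i ∈ B, c ≤ x t i → c ≤ x (t + 1) i := by
    intro t a c ha haα₂ hδ hB i hi hci
    have hk := hkey t a ha hB i hi
    have hxi := hx t i
    have hW1 : ∑ j ∈ B, w t i j ≤ 1 :=
      le_trans (Finset.sum_le_sum_of_subset_of_nonneg (Finset.subset_univ B)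
        (fun j _ _ => hw0 t i j)) (hwsum t i)
    have hW0 : 0 ≤ ∑ j ∈ B, w t i j := Finset.sum_nonneg fun j _ => hw0 t i j
    have hga : 0 < γ * a + 1 := by positivity
    have hcoef : 0 ≤ γ - (∑ j ∈ B, w t i j) * (γ * a + 1) := by
      nlinarith [mul_nonneg (sub_nonneg.mpr hW1) hga.le, hα2γ, mul_le_mul_of_nonneg_left haα₂ hγ0.le]
    nlinarith [hk, mul_nonneg (sub_nonneg.mpr hci) hcoef, mul_nonneg hW0 hδ, hγ0]
  -- drift: each agent eventually exceeds c and stays there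
  have hdrift : ∀ (a c : ℝ) (T : ℕ), 0 < a → a ≤ α₂ → c < 1 →
      0 < γ * a * (1 - c) - (1 + c) →
      (∀ t, T ≤ t → ∀ j ∈ B, a ≤ x t j) →
      ∀ i ∈ B, ∃ s, T ≤ s ∧ ∀ t, s ≤ t → c ≤ x t i := by
    intro a c T ha haα₂ hc1 hδ hB i hi
    have hgain : ∀ t, T ≤ t → x t i ≤ c →
        γ * x t i + (∑ j ∈ B, w t i j) * (γ * a * (1 - c) - (1 + c)) ≤ γ * x (t + 1) i := by
      intro t ht hxc
      have hk := hkey t a ha (hB t ht) i hi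
      have hW0 : 0 ≤ ∑ j ∈ B, w t i j := Finset.sum_nonneg fun j _ => hw0 t i j
      have hmono : (∑ j ∈ B, w t i j) * (γ * a * (1 - c) - (1 + c))
          ≤ (∑ j ∈ B, w t i j) * (γ * a * (1 - x t i) - (1 + x t i)) := by
        apply mul_le_mul_of_nonneg_left _ hW0
        nlinarith [mul_nonneg (sub_nonneg.mpr hxc) (by positivity : (0:ℝ) ≤ γ * a + 1)]
      linarith
    have hbound : ∀ k, (∀ u, T ≤ u → u < T + k → x u i ≤ c) →
        γ * x T i + (γ * a * (1 - c) - (1 + c)) * ∑ t ∈ Finset.Ico T (T + k), ∑ j ∈ B, w t i j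
          ≤ γ * x (T + k) i := by
      intro k
      induction k with
      | zero => intro _; simp
      | succ k ih =>
        intro h
        have h1 := ih (fun u hu hu' => h u hu (by omega))
        have h2 := hgain (T + k) (by omega) (h (T + k) (by omega) (by omega))
        rw [show T + (k + 1) = (T + k) + 1 from by omega,
          Finset.sum_Ico_succ_top (by omega)]
        nlinarith [h1, h2]
    have hreach : ∃ s, T ≤ s ∧ c ≤ x s i := by
      by_contra hcon
      push_neg at hcon
      obtain ⟨m, hm1, hm2⟩ := (((hconn i hi).eventually_ge_atTop
        (∑ t ∈ Finset.range T, ∑ j ∈ B, w t i j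
          + 3 * γ / (γ * a * (1 - c) - (1 + c)))).and (eventually_ge_atTop T)).exists
      have hk := hbound (m - T) (fun u hu _ => (hcon u hu).le)
      rw [show T + (m - T) = m by omega] at hk
      have hIco : ∑ t ∈ Finset.Ico T m, ∑ j ∈ B, w t i j
          = ∑ t ∈ Finset.range m, ∑ j ∈ B, w t i j
            - ∑ t ∈ Finset.range T, ∑ j ∈ B, w t i j := by
        rw [Finset.sum_Ico_eq_sub _ hm2]
      have hsum : 3 * γ / (γ * a * (1 - c) - (1 + c)) ≤ ∑ t ∈ Finset.Ico T m, ∑ j ∈ B, w t i j := by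
        rw [hIco]; linarith
      have hsum' : 3 * γ ≤ (γ * a * (1 - c) - (1 + c)) * ∑ t ∈ Finset.Ico T m, ∑ j ∈ B, w t i j := by
        rw [div_le_iff₀ hδ] at hsum; linarith [hsum]
      have hxm := (hx m i).2
      have hxT := (hx T i).1
      nlinarith [hk, hsum', hγ0]
    obtain ⟨s, hsT, hsc⟩ := hreach
    refine ⟨s, hsT, ?_⟩
    intro t ht
    induction t, ht using Nat.le_induction with
    | base => exact hsc
    | succ t ht ih =>
      exact hper t a c ha haα₂ hδ.le (hB t (le_trans hsT ht)) i hi ih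
  -- the set of achieved lower bounds
  set S : Set ℝ := {a | α₁ < a ∧ a ≤ α₂ ∧ ∃ T, ∀ t, T ≤ t → ∀ j ∈ B, a ≤ x t j} with hSdef
  have hBne : B.Nonempty := Finset.card_pos.mp (by omega)
  have ha₀ : min α₂ (B.inf' hBne fun j => x t₀ j) ∈ S := by
    refine ⟨lt_min hα₁α₂ ((Finset.lt_inf'_iff hBne).mpr hinit), min_le_left _ _, t₀, ?_⟩
    intro t ht
    induction t, ht using Nat.le_induction with
    | base => exact fun j hj => le_trans (min_le_right _ _) (Finset.inf'_le _ hj)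
    | succ t ht ih =>
      intro j hj
      set a := min α₂ (B.inf' hBne fun j => x t₀ j) with hadef
      have ha1 : α₁ < a := lt_min hα₁α₂ ((Finset.lt_inf'_iff hBne).mpr hinit)
      have ha2 : a ≤ α₂ := min_le_left _ _
      refine hper t a a (lt_trans hα₁pos ha1) ha2 ?_ ih j hj (ih j hj)
      nlinarith [hfact a, mul_nonneg hγ0.le
        (mul_nonneg (sub_nonneg.mpr ha1.le) (sub_nonneg.mpr ha2))]
  have hSne : S.Nonempty := ⟨_, ha₀⟩
  have hSbdd : BddAbove S := ⟨α₂, fun a ha => ha.2.1⟩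
  have hLle : sSup S ≤ α₂ := csSup_le hSne fun a ha => ha.2.1
  have hLgt : α₁ < sSup S := lt_of_lt_of_le ha₀.1 (le_csSup hSbdd ha₀)
  have hLeq : sSup S = α₂ := by
    by_contra hne
    have hLlt : sSup S < α₂ := lt_of_le_of_ne hLle hne
    have hL1 : sSup S < 1 := lt_trans hLlt hα₂1
    have hγL : 0 < γ * (1 - sSup S) := by nlinarith
    have hqL : 0 < γ * (sSup S * (1 - sSup S)) - (1 + sSup S) := by
      nlinarith [hfact (sSup S), mul_pos hγ0 (mul_pos (sub_pos.mpr hLgt) (sub_pos.mpr hLlt))]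
    have hρ : (1 + sSup S) / (γ * (1 - sSup S)) < sSup S := by
      rw [div_lt_iff₀ hγL]; nlinarith
    obtain ⟨a, haS, haρ⟩ := exists_lt_of_lt_csSup hSne hρ
    obtain ⟨ha₁, haα₂le, T, hT⟩ := haS
    have ha0 : 0 < a := lt_trans hα₁pos ha₁
    have haL : a ≤ sSup S := le_csSup hSbdd ⟨ha₁, haα₂le, T, hT⟩
    have haα₂ : a < α₂ := lt_of_le_of_lt haL hLlt
    have hga : (0:ℝ) < γ * a + 1 := by positivity
    have hha : sSup S < (γ * a - 1) / (γ * a + 1) := by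
      rw [lt_div_iff₀ hga]
      have := (div_lt_iff₀ hγL).mp haρ
      nlinarith
    have hhaα₂ : (γ * a - 1) / (γ * a + 1) < α₂ := by
      rw [div_lt_iff₀ hga]
      nlinarith [heq₂, mul_pos (mul_pos hγ0 (sub_pos.mpr hα₂1)) (sub_pos.mpr haα₂)]
    set c := (sSup S + (γ * a - 1) / (γ * a + 1)) / 2 with hcdef
    have hcL : sSup S < c := by rw [hcdef]; linarith
    have hcα₂ : c < α₂ := by rw [hcdef]; linarith
    have hc1 : c < 1 := lt_trans hcα₂ hα₂1
    have hδc : 0 < γ * a * (1 - c) - (1 + c) := by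
      have hch : c < (γ * a - 1) / (γ * a + 1) := by rw [hcdef]; linarith
      have := (lt_div_iff₀ hga).mp hch
      nlinarith
    have hreach : ∀ i : Fin n, ∃ s, ∀ t, s ≤ t → i ∈ B → c ≤ x t i := by
      intro i
      by_cases hiB : i ∈ B
      · obtain ⟨s, _, hs⟩ := hdrift a c T ha0 haα₂.le hc1 hδc hT i hiB
        exact ⟨s, fun t ht _ => hs t ht⟩
      · exact ⟨0, fun t _ h => absurd h hiB⟩
    choose s hs using hreach
    have hcS : c ∈ S :=
      ⟨lt_trans hLgt hcL, hcα₂.le, Finset.univ.sup s,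
        fun t ht j hj => hs j t (le_trans (Finset.le_sup (mem_univ j)) ht) hj⟩
    have : c ≤ sSup S := le_csSup hSbdd hcS
    linarith
  intro i hi
  have hbdd : IsBoundedUnder (· ≤ ·) atTop (fun t => x t i) :=
    ⟨1, Filter.eventually_map.mpr (Filter.Eventually.of_forall fun t => (hx t i).2)⟩
  rw [← hLeq]
  apply csSup_le hSne
  intro a haS
  obtain ⟨_, _, T, hT⟩ := haS
  exact Filter.le_liminf_of_le hbdd.isCoboundedUnder_ge
    ((eventually_ge_atTop T).mono fun t ht => hT t ht i hi)
end

section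
/- Under the PC-lite dynamics, let B ⊆ V with |B| > 1 be a connected subset of agents with bubble number γ_B > 3 + 2√2, and let α₁ < α₂ be the two positive solutions of (1+α)/(α(1−α)) = γ_B. If for some time t₀ we have x_i(t₀) < −α₁ for all i ∈ B, then limsup_{t→∞} x_i(t) ≤ −α₂ for all i ∈ B. -/
open Filter Finset Topology

/-!
If every agent of `B` is at most `-α`, an agent `i ∈ B` at `y` moves by at most
`-W (α (1 + y) - (1 - y) / γ)`, where `W` is its total weight on `B`: the bubble condition makes the
pull towards `+1` from outside `B` at most `1 / γ` of the pull towards `-1` from inside. At `y = -β`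
the bracket is the margin `α (1 - β) - (1 + β) / γ`, which for `β = α` factors as
`(α - α₁) (α₂ - α)`. Hence the level `-α` is never crossed upwards when `α ∈ [α₁, α₂]`, and when the
margin is positive the divergence of the weight on `B` drives each agent of `B` below `-β` in finite
time, after which it stays there. For `c < α₂` the admissible steps `β - α` are bounded below
uniformly for `α` between the initial level and `c`, so finitely many steps push `B` below `-c`.
-/
lemma abs_mul_sign_sub_of_nonpos {z : ℝ} (hz : z ≤ 0) (y : ℝ) :
    |z| * (Real.sign z - y) = z * (1 + y) := by
  rcases hz.lt_or_eq with hz | rfl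
  · rw [abs_of_neg hz, Real.sign_of_neg hz]; ring
  · simp

lemma abs_mul_sign_sub_le {y z : ℝ} (hz : |z| ≤ 1) (hy : y ≤ 1) :
    |z| * (Real.sign z - y) ≤ 1 - y := by
  rcases lt_trichotomy z 0 with hz' | rfl | hz'
  · rw [Real.sign_of_neg hz']; nlinarith [abs_nonneg z]
  · simpa using hy
  · rw [Real.sign_of_pos hz']; nlinarith [abs_nonneg z]

lemma exists_between_forall_le {ι : Type*} {s : Finset ι} {f : ι → ℝ} {a b : ℝ} (hab : a < b)
    (hf : ∀ j ∈ s, a < f j) : ∃ c, a < c ∧ c < b ∧ ∀ j ∈ s, c ≤ f j :=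
  (eventually_mem_nhdsWithin.and <| nhdsWithin_le_nhds <| (eventually_lt_nhds hab).and <|
    (eventually_all_finset s).2 fun j hj => eventually_le_nhds (hf j hj)).exists (f := 𝓝[>] a)

lemma exists_le_of_tendsto_sum_of_le_sub {u a : ℕ → ℝ} {s : ℕ} {c δ L : ℝ} (hδ : 0 < δ)
    (hL : ∀ t, L ≤ u t) (ha : Tendsto (fun T => ∑ t ∈ range T, a t) atTop atTop)
    (hstep : ∀ t ≥ s, c < u t → u (t + 1) ≤ u t - δ * a t) : ∃ t ≥ s, u t ≤ c := by
  by_contra! habove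
  have htelescope : ∀ T ≥ s, u T ≤ u s - δ * (∑ t ∈ range T, a t - ∑ t ∈ range s, a t) := by
    intro T hT
    induction T, hT using Nat.le_induction with
    | base => simp
    | succ T hT ih => rw [sum_range_succ]; linarith [hstep T hT (habove T hT)]
  obtain ⟨T, hTs, hT⟩ := ((eventually_ge_atTop s).and
    (ha.eventually_ge_atTop (∑ t ∈ range s, a t + (u s - L + 1) / δ))).exists
  have hdrop : u s - L + 1 ≤ δ * (∑ t ∈ range T, a t - ∑ t ∈ range s, a t) := by
    rw [← div_le_iff₀' hδ]; linarith
  linarith [htelescope T hTs, hL T]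

lemma prop_of_step_min_add {P : ℝ → Prop} {a c Δ : ℝ} (hΔ : 0 < Δ) (hac : a ≤ c) (ha : P a)
    (hstep : ∀ b, a ≤ b → b ≤ c → P b → P (min c (b + Δ))) : P c := by
  have hreach : ∀ k : ℕ, P (min c (a + k * Δ)) := by
    intro k
    induction k with
    | zero => simpa [min_eq_right hac] using ha
    | succ k ih =>
      have h := hstep _ (le_min hac (le_add_of_nonneg_right (by positivity))) (min_le_left _ _) ih
      have hmin : min c (min c (a + k * Δ) + Δ) = min c (a + (k + 1 : ℕ) * Δ) := by
        push_cast
        rcases le_total c (a + k * Δ) with hk | hk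
        · rw [min_eq_left hk, min_eq_left (by linarith), min_eq_left (by linarith)]
        · rw [min_eq_right hk, add_one_mul, add_assoc]
      rwa [hmin] at h
  obtain ⟨k, hk⟩ := Archimedean.arch (c - a) hΔ
  simpa [min_eq_left (show c ≤ a + k * Δ by rw [← nsmul_eq_mul]; linarith)] using hreach k

lemma mul_one_sub_eq_of_div_eq {a γ : ℝ} (hγ : γ ≠ 0) (h : (1 + a) / (a * (1 - a)) = γ) :
    a * (1 - a) = (1 + a) / γ := by
  have ha : a * (1 - a) ≠ 0 := by
    rintro ha
    rw [ha, div_zero] at h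
    exact hγ h.symm
  rw [eq_div_iff hγ, ← h, mul_div_cancel₀ _ ha]

lemma sub_mul_sub_eq_of_mul_one_sub_eq {γ a₁ a₂ : ℝ} (h₁ : a₁ * (1 - a₁) = (1 + a₁) / γ)
    (h₂ : a₂ * (1 - a₂) = (1 + a₂) / γ) (hne : a₁ ≠ a₂) (b : ℝ) :
    b * (1 - b) - (1 + b) / γ = (b - a₁) * (a₂ - b) := by
  have hsum : a₁ + a₂ = 1 - γ⁻¹ := by
    have h : (a₁ - a₂) * (a₁ + a₂ - (1 - γ⁻¹)) = 0 := by linear_combination h₂ - h₁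
    linarith [(mul_eq_zero.1 h).resolve_left (sub_ne_zero.2 hne)]
  have hprod : a₁ * a₂ = γ⁻¹ := by linear_combination h₁ + a₁ * hsum
  linear_combination -b * hsum + hprod

lemma add_one_div_lt_one_of_mul_one_sub_eq {a γ : ℝ} (ha : 0 < a) (hγ : 0 < γ)
    (h : a * (1 - a) = (1 + a) / γ) : a + 1 / γ < 1 := by
  have hpos : 0 < a * (1 - a - 1 / γ) := by
    rw [show a * (1 - a - 1 / γ) = 1 / γ by linear_combination h]
    positivity
  linarith [pos_of_mul_pos_right hpos ha.le]

structure IsPCLite {ι : Type*} [Fintype ι] [DecidableEq ι] (x : ℕ → ι → ℝ)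
    (w : ℕ → ι → ι → ℝ) : Prop where
  mem_Icc : ∀ t i, x t i ∈ Set.Icc (-1 : ℝ) 1
  weight_nonneg : ∀ t i j, 0 ≤ w t i j
  weight_self : ∀ t i, w t i i = 0
  sum_weight_le_one : ∀ t i, ∑ j, w t i j ≤ 1
  step : ∀ t i, x (t + 1) i =
    x t i + ∑ j ∈ univ.erase i, w t i j * |x t j| * (Real.sign (x t j) - x t i)

namespace IsPCLite

variable {ι : Type*} [Fintype ι] [DecidableEq ι] {x : ℕ → ι → ℝ} {w : ℕ → ι → ι → ℝ}
  {B : Finset ι} {γ α β : ℝ} {t : ℕ} {i : ι}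

lemma sum_weight_nonneg (h : IsPCLite x w) (t : ℕ) (i : ι) (s : Finset ι) :
    0 ≤ ∑ j ∈ s, w t i j :=
  sum_nonneg fun j _ => h.weight_nonneg t i j

lemma partial_sum_weight_le_one (h : IsPCLite x w) (t : ℕ) (i : ι) (s : Finset ι) :
    ∑ j ∈ s, w t i j ≤ 1 :=
  (sum_le_sum_of_subset_of_nonneg (subset_univ s) fun j _ _ => h.weight_nonneg t i j).trans
    (h.sum_weight_le_one t i)

lemma le_sub_of_forall_le (h : IsPCLite x w) (hγ : 0 < γ) (hα : 0 ≤ α)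
    (hbubble : γ * ∑ j ∈ Bᶜ, w t i j ≤ ∑ j ∈ B, w t i j) (hB : ∀ j ∈ B, x t j ≤ -α) :
    x (t + 1) i ≤ x t i - (∑ j ∈ B, w t i j) * (α * (1 + x t i) - (1 - x t i) / γ) := by
  obtain ⟨hlo, hhi⟩ := h.mem_Icc t i
  set f := fun j => w t i j * |x t j| * (Real.sign (x t j) - x t i)
  have hinside : ∑ j ∈ B, f j ≤ (∑ j ∈ B, w t i j) * (-α * (1 + x t i)) := by
    rw [sum_mul]
    refine sum_le_sum fun j hj => ?_
    have hxj := hB j hj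
    simp only [f, mul_assoc, abs_mul_sign_sub_of_nonpos (hxj.trans (neg_nonpos.2 hα))]
    exact mul_le_mul_of_nonneg_left (mul_le_mul_of_nonneg_right hxj (by linarith))
      (h.weight_nonneg t i j)
  have houtside : ∑ j ∈ Bᶜ, f j ≤ (∑ j ∈ Bᶜ, w t i j) * (1 - x t i) := by
    rw [sum_mul]
    refine sum_le_sum fun j _ => ?_
    simp only [f, mul_assoc]
    exact mul_le_mul_of_nonneg_left
      (abs_mul_sign_sub_le (abs_le.2 (h.mem_Icc t j)) hhi) (h.weight_nonneg t i j)
  have hbubble' : (∑ j ∈ Bᶜ, w t i j) * (1 - x t i) ≤ (∑ j ∈ B, w t i j) / γ * (1 - x t i) :=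
    mul_le_mul_of_nonneg_right ((le_div_iff₀' hγ).2 hbubble) (by linarith)
  rw [h.step, sum_erase _ (by simp [h.weight_self]), ← sum_add_sum_compl B f]
  linear_combination hinside + houtside + hbubble'

lemma le_of_le_of_forall_le (h : IsPCLite x w) (hγ : 0 < γ) (hα : 0 ≤ α) (hαγ : α + 1 / γ ≤ 1)
    (hmargin : 0 ≤ α * (1 - β) - (1 + β) / γ)
    (hbubble : γ * ∑ j ∈ Bᶜ, w t i j ≤ ∑ j ∈ B, w t i j) (hB : ∀ j ∈ B, x t j ≤ -α)
    (hi : x t i ≤ -β) : x (t + 1) i ≤ -β := by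
  have hW₀ := h.sum_weight_nonneg t i B
  have hW : (∑ j ∈ B, w t i j) * (α + 1 / γ) ≤ 1 :=
    mul_le_one₀ (h.partial_sum_weight_le_one t i B) (by positivity) hαγ
  have hslope : 0 ≤ (-β - x t i) * (1 - (∑ j ∈ B, w t i j) * (α + 1 / γ)) :=
    mul_nonneg (by linarith) (by linarith)
  linear_combination h.le_sub_of_forall_le hγ hα hbubble hB + mul_nonneg hW₀ hmargin + hslope

lemma le_sub_of_neg_le_of_forall_le (h : IsPCLite x w) (hγ : 0 < γ) (hα : 0 ≤ α)
    (hbubble : γ * ∑ j ∈ Bᶜ, w t i j ≤ ∑ j ∈ B, w t i j) (hB : ∀ j ∈ B, x t j ≤ -α)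
    (hi : -β ≤ x t i) :
    x (t + 1) i ≤ x t i - (α * (1 - β) - (1 + β) / γ) * ∑ j ∈ B, w t i j := by
  have hW₀ := h.sum_weight_nonneg t i B
  have hslope : 0 ≤ (∑ j ∈ B, w t i j) * (α + 1 / γ) * (x t i + β) :=
    mul_nonneg (mul_nonneg hW₀ (by positivity)) (by linarith)
  linear_combination h.le_sub_of_forall_le hγ hα hbubble hB + hslope

lemma forall_le_of_le (h : IsPCLite x w) (hγ : 0 < γ) (hα : 0 ≤ α) (hαγ : α + 1 / γ ≤ 1)
    (hmargin : 0 ≤ α * (1 - α) - (1 + α) / γ)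
    (hbubble : ∀ t, ∀ i ∈ B, γ * ∑ j ∈ Bᶜ, w t i j ≤ ∑ j ∈ B, w t i j) {t₀ : ℕ}
    (h₀ : ∀ j ∈ B, x t₀ j ≤ -α) : ∀ t ≥ t₀, ∀ j ∈ B, x t j ≤ -α := by
  intro t ht
  induction t, ht using Nat.le_induction with
  | base => exact h₀
  | succ t _ ih =>
    exact fun j hj => h.le_of_le_of_forall_le hγ hα hαγ hmargin (hbubble t j hj) ih (ih j hj)

lemma eventually_le_of_eventually_forall_le (h : IsPCLite x w) (hγ : 0 < γ) (hα : 0 ≤ α)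
    (hαγ : α + 1 / γ ≤ 1) (hmargin : 0 < α * (1 - β) - (1 + β) / γ)
    (hbubble : ∀ t, γ * ∑ j ∈ Bᶜ, w t i j ≤ ∑ j ∈ B, w t i j)
    (hconn : Tendsto (fun T => ∑ t ∈ range T, ∑ j ∈ B, w t i j) atTop atTop)
    (hB : ∀ᶠ t in atTop, ∀ j ∈ B, x t j ≤ -α) : ∀ᶠ t in atTop, x t i ≤ -β := by
  obtain ⟨s, hs⟩ := eventually_atTop.1 hB
  obtain ⟨t₁, hst₁, ht₁⟩ := exists_le_of_tendsto_sum_of_le_sub (u := fun t => x t i) hmargin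
    (fun t => (h.mem_Icc t i).1) hconn
    fun t ht hxt => h.le_sub_of_neg_le_of_forall_le hγ hα (hbubble t) (hs t ht) hxt.le
  refine eventually_atTop.2 ⟨t₁, fun t ht => ?_⟩
  induction t, ht using Nat.le_induction with
  | base => exact ht₁
  | succ t ht ih =>
    exact h.le_of_le_of_forall_le hγ hα hαγ hmargin.le (hbubble t) (hs t (hst₁.trans ht)) ih

lemma eventually_forall_le_of_eventually_forall_le (h : IsPCLite x w) (hγ : 0 < γ)
    (hα : 0 ≤ α) (hαγ : α + 1 / γ ≤ 1) (hmargin : 0 < α * (1 - β) - (1 + β) / γ)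
    (hbubble : ∀ t, ∀ i ∈ B, γ * ∑ j ∈ Bᶜ, w t i j ≤ ∑ j ∈ B, w t i j)
    (hconn : ∀ i ∈ B, Tendsto (fun T => ∑ t ∈ range T, ∑ j ∈ B, w t i j) atTop atTop)
    (hB : ∀ᶠ t in atTop, ∀ j ∈ B, x t j ≤ -α) : ∀ᶠ t in atTop, ∀ j ∈ B, x t j ≤ -β :=
  (eventually_all_finset B).2 fun i hi =>
    h.eventually_le_of_eventually_forall_le hγ hα hαγ hmargin (hbubble · i hi) (hconn i hi) hB

lemma eventually_forall_le_of_factor {a₀ a₁ a₂ c : ℝ} (h : IsPCLite x w) (hγ : 0 < γ)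
    (hfactor : ∀ b, b * (1 - b) - (1 + b) / γ = (b - a₁) * (a₂ - b))
    (ha₁ : 0 ≤ a₁) (ha₂ : a₂ + 1 / γ ≤ 1) (ha₁₀ : a₁ < a₀) (ha₀c : a₀ ≤ c) (hca₂ : c < a₂)
    (hbubble : ∀ t, ∀ i ∈ B, γ * ∑ j ∈ Bᶜ, w t i j ≤ ∑ j ∈ B, w t i j)
    (hconn : ∀ i ∈ B, Tendsto (fun T => ∑ t ∈ range T, ∑ j ∈ B, w t i j) atTop atTop)
    (h₀ : ∀ᶠ t in atTop, ∀ j ∈ B, x t j ≤ -a₀) : ∀ᶠ t in atTop, ∀ j ∈ B, x t j ≤ -c := by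
  -- on `[a₀, c]` the margin at `β = α` is at least `2 Δ`, and raising `β` by `Δ` costs at most `Δ`
  set Δ := (a₀ - a₁) * (a₂ - c) / 2 with hΔ
  have hΔpos : 0 < Δ := by have := mul_pos (sub_pos.2 ha₁₀) (sub_pos.2 hca₂); positivity
  refine prop_of_step_min_add (P := fun b => ∀ᶠ t in atTop, ∀ j ∈ B, x t j ≤ -b) hΔpos ha₀c h₀
    fun b hb hbc hP =>
    h.eventually_forall_le_of_eventually_forall_le hγ (by linarith) (by linarith) ?_ hbubble hconn hP
  have hstep : 0 ≤ min c (b + Δ) - b := sub_nonneg.2 (le_min hbc (by linarith))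
  have hpull : (b + 1 / γ) * (min c (b + Δ) - b) ≤ 1 * Δ :=
    mul_le_mul (by linarith) (by linarith [min_le_right c (b + Δ)]) hstep zero_le_one
  have hmargin : (a₀ - a₁) * (a₂ - c) ≤ (b - a₁) * (a₂ - b) :=
    mul_le_mul (by linarith) (by linarith) (by linarith) (by linarith)
  linear_combination -hfactor b + hmargin + hpull + hΔpos + 2 * hΔ

lemma eventually_forall_le_of_forall_lt {a₁ a₂ c : ℝ} {t₀ : ℕ} (h : IsPCLite x w) (hγ : 0 < γ)
    (h₁ : a₁ * (1 - a₁) = (1 + a₁) / γ) (h₂ : a₂ * (1 - a₂) = (1 + a₂) / γ)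
    (ha₁ : 0 < a₁) (ha₁₂ : a₁ < a₂)
    (hbubble : ∀ t, ∀ i ∈ B, γ * ∑ j ∈ Bᶜ, w t i j ≤ ∑ j ∈ B, w t i j)
    (hconn : ∀ i ∈ B, Tendsto (fun T => ∑ t ∈ range T, ∑ j ∈ B, w t i j) atTop atTop)
    (hinit : ∀ j ∈ B, x t₀ j < -a₁) (hc : c < a₂) :
    ∀ᶠ t in atTop, ∀ j ∈ B, x t j ≤ -c := by
  have hfactor := sub_mul_sub_eq_of_mul_one_sub_eq h₁ h₂ ha₁₂.ne
  have ha₂ := (add_one_div_lt_one_of_mul_one_sub_eq (ha₁.trans ha₁₂) hγ h₂).le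
  obtain ⟨a₀, ha₁₀, ha₀₂, h₀⟩ :=
    exists_between_forall_le (f := fun j => -x t₀ j) ha₁₂ fun j hj => lt_neg.1 (hinit j hj)
  have hstay := h.forall_le_of_le hγ (by linarith) (by linarith)
    (by rw [hfactor]; exact mul_nonneg (by linarith) (by linarith)) hbubble
    fun j hj => le_neg.1 (h₀ j hj)
  refine (h.eventually_forall_le_of_factor hγ hfactor ha₁.le ha₂ ha₁₀ (le_max_left a₀ c)
    (max_lt ha₀₂ hc) hbubble hconn (eventually_atTop.2 ⟨t₀, hstay⟩)).mono fun t ht j hj => ?_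
  exact (ht j hj).trans (neg_le_neg (le_max_right a₀ c))

end IsPCLite

theorem pc_lite_bubble_polarization_neg_general {n : ℕ}
    (x : ℕ → Fin n → ℝ) (w : ℕ → Fin n → Fin n → ℝ)
    (hx : ∀ t i, x t i ∈ Set.Icc (-1 : ℝ) 1)
    (hw0 : ∀ t i j, 0 ≤ w t i j)
    (hwdiag : ∀ t i, w t i i = 0)
    (hwsum : ∀ t i, ∑ j, w t i j ≤ 1)
    (hdyn : ∀ t i, x (t + 1) i =
      x t i + ∑ j ∈ univ.erase i, w t i j * |x t j| * (Real.sign (x t j) - x t i))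
    (B : Finset (Fin n))
    (hconn : ∀ i ∈ B,
      Tendsto (fun T => ∑ t ∈ Finset.range T, ∑ j ∈ B, w t i j) atTop atTop)
    (γ : ℝ) (hγ : 3 + 2 * Real.sqrt 2 < γ)
    (hbubble : ∀ t, ∀ i ∈ B, γ * ∑ j ∈ Bᶜ, w t i j ≤ ∑ j ∈ B, w t i j)
    (α₁ α₂ : ℝ) (hα₁pos : 0 < α₁) (hα₁α₂ : α₁ < α₂)
    (hsol₁ : (1 + α₁) / (α₁ * (1 - α₁)) = γ)
    (hsol₂ : (1 + α₂) / (α₂ * (1 - α₂)) = γ)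
    (t₀ : ℕ) (hinit : ∀ i ∈ B, x t₀ i < -α₁) :
    ∀ i ∈ B, Filter.limsup (fun t => x t i) atTop ≤ -α₂ := by
  have hγ₀ : 0 < γ := lt_trans (by positivity) hγ
  have hpc : IsPCLite x w := ⟨hx, hw0, hwdiag, hwsum, hdyn⟩
  intro i hi
  refine le_of_forall_gt_imp_ge_of_dense fun d hd =>
    limsup_le_of_le (isCoboundedUnder_le_of_le atTop fun t => (hx t i).1) ?_
  have hbelow := hpc.eventually_forall_le_of_forall_lt hγ₀ (mul_one_sub_eq_of_div_eq hγ₀.ne' hsol₁)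
    (mul_one_sub_eq_of_div_eq hγ₀.ne' hsol₂) hα₁pos hα₁α₂ hbubble hconn hinit (c := -d)
    (by linarith)
  exact hbelow.mono fun t ht => by simpa using ht i hi

/-- Under the PC-lite dynamics, if a connected subset `B` (|B| > 1) has bubble
number `γ > 3 + 2√2` with `α₁ < α₂` the two positive solutions of `(1+α)/(α(1-α)) = γ`, and
at some time `t₀` every member's opinion is below `-α₁`, then each member's limsup is ≤ `-α₂`. -/
theorem pc_lite_bubble_polarization_neg {n : ℕ} (hn : 2 ≤ n)
    (x : ℕ → Fin n → ℝ) (w : ℕ → Fin n → Fin n → ℝ)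
    (hx : ∀ t i, x t i ∈ Set.Icc (-1 : ℝ) 1)
    (hw0 : ∀ t i j, 0 ≤ w t i j)
    (hwdiag : ∀ t i, w t i i = 0)
    (hwsum : ∀ t i, ∑ j, w t i j ≤ 1)
    (hdyn : ∀ t i, x (t + 1) i =
      x t i + ∑ j ∈ univ.erase i, w t i j * |x t j| * (Real.sign (x t j) - x t i))
    (B : Finset (Fin n)) (hBcard : 1 < B.card)
    (hconn : ∀ i ∈ B,
      Tendsto (fun T => ∑ t ∈ Finset.range T, ∑ j ∈ B, w t i j) atTop atTop)
    (γ : ℝ) (hγ : 3 + 2 * Real.sqrt 2 < γ)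
    (hbubble : ∀ t, ∀ i ∈ B, γ * ∑ j ∈ Bᶜ, w t i j ≤ ∑ j ∈ B, w t i j)
    (α₁ α₂ : ℝ) (hα₁pos : 0 < α₁) (hα₁α₂ : α₁ < α₂)
    (hsol₁ : (1 + α₁) / (α₁ * (1 - α₁)) = γ)
    (hsol₂ : (1 + α₂) / (α₂ * (1 - α₂)) = γ)
    (t₀ : ℕ) (hinit : ∀ i ∈ B, x t₀ i < -α₁) :
    ∀ i ∈ B, Filter.limsup (fun t => x t i) atTop ≤ -α₂ :=
  pc_lite_bubble_polarization_neg_general x w hx hw0 hwdiag hwsum hdyn B hconn γ hγ hbubble α₁ α₂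
    hα₁pos hα₁α₂ hsol₁ hsol₂ t₀ hinit
end

section
/- Under the PC dynamics whose discounting functions satisfy d_i(a,b) = 1 whenever sgn(a) = sgn(b) and d_i(a,b) ≤ d whenever sgn(a) ≠ sgn(b), where 0 < d ≤ 1 is a constant, let B ⊆ V with |B| > 1 be a connected subset of agents with bubble number γ_B > (3 + 2√2)·d, and let α₁ < α₂ be the two positive solutions of (1+α)/(α(1−α)) = γ_B/d. If for some time t₀ we have x_i(t₀) > α₁ for all i ∈ B, then liminf_{t→∞} x_i(t) ≥ α₂ for all i ∈ B. -/
set_option maxHeartbeats 1000000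


open Filter Finset

/-- Under the PC dynamics with discounting functions equal to 1 for agreeing
signs and bounded by a constant `d ∈ (0,1]` for opposing signs, if a connected subset `B`
(|B| > 1) has bubble number `γ > (3 + 2√2)·d` with `α₁ < α₂` the two positive solutions of
`(1+α)/(α(1-α)) = γ/d`, and at some time `t₀` every member's opinion exceeds `α₁`, then
each member's liminf is ≥ `α₂`. -/
theorem pc_bubble_polarization_uniform_discount {n : ℕ} (hn : 2 ≤ n)
    (x : ℕ → Fin n → ℝ) (w : ℕ → Fin n → Fin n → ℝ)
    (d : Fin n → ℝ → ℝ → ℝ) (dc : ℝ) (hdc0 : 0 < dc) (hdc1 : dc ≤ 1)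
    (hx : ∀ t i, x t i ∈ Set.Icc (-1 : ℝ) 1)
    (hw0 : ∀ t i j, 0 ≤ w t i j)
    (hwdiag : ∀ t i, w t i i = 0)
    (hwsum : ∀ t i, ∑ j, w t i j ≤ 1)
    (hdrange : ∀ i, ∀ a ∈ Set.Icc (-1 : ℝ) 1, ∀ b ∈ Set.Icc (-1 : ℝ) 1,
      d i a b ∈ Set.Icc (0 : ℝ) 1)
    (hdsame : ∀ i, ∀ a ∈ Set.Icc (-1 : ℝ) 1, ∀ b ∈ Set.Icc (-1 : ℝ) 1,
      Real.sign a = Real.sign b → d i a b = 1)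
    (hddiff : ∀ i, ∀ a ∈ Set.Icc (-1 : ℝ) 1, ∀ b ∈ Set.Icc (-1 : ℝ) 1,
      Real.sign a ≠ Real.sign b → d i a b ≤ dc)
    (hdyn : ∀ t i, x (t + 1) i =
      x t i + ∑ j ∈ univ.erase i,
        d i (x t i) (x t j) * w t i j * |x t j| * (Real.sign (x t j) - x t i))
    (B : Finset (Fin n)) (hBcard : 1 < B.card)
    (hconn : ∀ i ∈ B,
      Tendsto (fun T => ∑ t ∈ Finset.range T, ∑ j ∈ B, w t i j) atTop atTop)
    (γ : ℝ) (hγ : (3 + 2 * Real.sqrt 2) * dc < γ)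
    (hbubble : ∀ t, ∀ i ∈ B, γ * ∑ j ∈ Bᶜ, w t i j ≤ ∑ j ∈ B, w t i j)
    (α₁ α₂ : ℝ) (hα₁pos : 0 < α₁) (hα₁α₂ : α₁ < α₂)
    (hsol₁ : (1 + α₁) / (α₁ * (1 - α₁)) = γ / dc)
    (hsol₂ : (1 + α₂) / (α₂ * (1 - α₂)) = γ / dc)
    (t₀ : ℕ) (hinit : ∀ i ∈ B, α₁ < x t₀ i) :
    ∀ i ∈ B, α₂ ≤ Filter.liminf (fun t => x t i) atTop := by
  have hγpos : 0 < γ := by nlinarith [Real.sqrt_nonneg 2]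
  set c : ℝ := dc / γ with hc_def
  have hcpos : 0 < c := div_pos hdc0 hγpos
  have key : ∀ α : ℝ, 0 < α → (1 + α) / (α * (1 - α)) = γ / dc →
      α < 1 ∧ α * (1 - α) = c * (1 + α) := by
    intro α hα hsol
    have hγdc : 0 < γ / dc := div_pos hγpos hdc0
    have hden : 0 < α * (1 - α) := by
      rcases lt_trichotomy (α * (1 - α)) 0 with h | h | h
      · have : (1 + α) / (α * (1 - α)) < 0 := div_neg_of_pos_of_neg (by linarith) h
        rw [hsol] at this; linarith
      · rw [h, div_zero] at hsol; rw [← hsol] at hγdc; linarith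
      · exact h
    have hα1 : α < 1 := by nlinarith
    refine ⟨hα1, ?_⟩
    have hγne : (γ:ℝ) ≠ 0 := ne_of_gt hγpos
    have hdcne : (dc:ℝ) ≠ 0 := ne_of_gt hdc0
    rw [div_eq_div_iff (ne_of_gt hden) hdcne] at hsol
    rw [hc_def]
    field_simp
    linarith [hsol]
  obtain ⟨hα₁lt1, hq1⟩ := key α₁ hα₁pos hsol₁
  obtain ⟨hα₂lt1, hq2⟩ := key α₂ (by linarith) hsol₂
  have hsum : α₁ + α₂ = 1 - c := by
    have hz : (α₂ - α₁) * (1 - (α₁ + α₂) - c) = 0 := by linear_combination hq2 - hq1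
    rcases mul_eq_zero.mp hz with h | h
    · exfalso; linarith [sub_pos.mpr hα₁α₂]
    · linarith
  have hprod : α₁ * α₂ = c := by linear_combination hq1 + α₁ * hsum
  have hα₂2c : α₂ + 2 * c ≤ 1 := by
    nlinarith [mul_nonneg hα₁pos.le (sub_nonneg.mpr hα₂lt1.le)]

  -- basic weight bounds
  have hW0 : ∀ t i, (0:ℝ) ≤ ∑ j ∈ B, w t i j := fun t i =>
    Finset.sum_nonneg fun j _ => hw0 t i j
  have hW1 : ∀ t i, ∑ j ∈ B, w t i j ≤ 1 := fun t i =>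
    le_trans (Finset.sum_le_sum_of_subset_of_nonneg (Finset.subset_univ B)
      fun j _ _ => hw0 t i j) (hwsum t i)
  -- one step lower bound
  have STEP : ∀ (t : ℕ) (i : Fin n), i ∈ B → ∀ μ : ℝ, 0 ≤ μ →
      (∀ j ∈ B, μ ≤ x t j ∧ 0 < x t j) →
      x t i + (∑ j ∈ B, w t i j) * (μ * (1 - x t i) - c * (1 + x t i)) ≤ x (t+1) i := by
    intro t i hiB μ hμ0 hxj
    have hxi1 : x t i ≤ 1 := (hx t i).2
    have hxim1 : -1 ≤ x t i := (hx t i).1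
    have hxipos : 0 < x t i := (hxj i hiB).2
    rw [hdyn t i]
    set f : Fin n → ℝ := fun j =>
      d i (x t i) (x t j) * w t i j * |x t j| * (Real.sign (x t j) - x t i) with hf
    have hfi : f i = 0 := by simp [hf, hwdiag t i]
    have hsplit : ∑ j ∈ univ.erase i, f j = ∑ j ∈ B, f j + ∑ j ∈ Bᶜ, f j := by
      rw [Finset.sum_erase _ hfi, Finset.sum_add_sum_compl]
    have hB_bound : ∀ j ∈ B, w t i j * (μ * (1 - x t i)) ≤ f j := by
      intro j hjB
      have hxjpos := (hxj j hjB).2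
      have hμxj := (hxj j hjB).1
      have hd1 : d i (x t i) (x t j) = 1 :=
        hdsame i _ (hx t i) _ (hx t j)
          (by rw [Real.sign_of_pos hxipos, Real.sign_of_pos hxjpos])
      rw [hf]
      simp only []
      rw [hd1, Real.sign_of_pos hxjpos, abs_of_pos hxjpos]
      nlinarith [mul_nonneg (mul_nonneg (hw0 t i j) (sub_nonneg.mpr hxi1))
        (sub_nonneg.mpr hμxj)]
    have hBc_bound : ∀ j ∈ Bᶜ, -(dc * (1 + x t i)) * w t i j ≤ f j := by
      intro j _
      have hdmem := hdrange i _ (hx t i) _ (hx t j)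
      have hwn := hw0 t i j
      have h1xi : (0:ℝ) ≤ 1 + x t i := by linarith
      rcases lt_trichotomy (x t j) 0 with hneg | hzero | hpos
      · have hsg : Real.sign (x t j) = -1 := Real.sign_of_neg hneg
        have hdle : d i (x t i) (x t j) ≤ dc :=
          hddiff i _ (hx t i) _ (hx t j)
            (by rw [Real.sign_of_pos hxipos, hsg]; norm_num)
        have habs : |x t j| ≤ 1 := abs_le.mpr ⟨(hx t j).1, (hx t j).2⟩
        have habs0 : (0:ℝ) ≤ |x t j| := abs_nonneg _
        rw [hf]
        simp only []
        rw [hsg]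
        have h1 : d i (x t i) (x t j) * w t i j * |x t j| ≤ dc * w t i j := by
          nlinarith [mul_nonneg (mul_nonneg hdmem.1 hwn) (sub_nonneg.mpr habs),
            mul_nonneg (sub_nonneg.mpr hdle) hwn]
        nlinarith [mul_nonneg (sub_nonneg.mpr h1) h1xi,
          mul_nonneg (mul_nonneg hdmem.1 hwn) habs0]
      · rw [hf]
        simp only []
        rw [hzero]
        simp only [abs_zero, mul_zero, zero_mul]
        nlinarith [mul_nonneg (mul_nonneg hdc0.le h1xi) hwn]
      · have hsg : Real.sign (x t j) = 1 := Real.sign_of_pos hpos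
        rw [hf]
        simp only []
        rw [hsg, abs_of_pos hpos]
        nlinarith [mul_nonneg (mul_nonneg (mul_nonneg hdmem.1 hwn) hpos.le)
          (sub_nonneg.mpr hxi1), mul_nonneg (mul_nonneg hdc0.le h1xi) hwn]
    have hBsum : (∑ j ∈ B, w t i j) * (μ * (1 - x t i)) ≤ ∑ j ∈ B, f j := by
      rw [Finset.sum_mul]
      exact Finset.sum_le_sum hB_bound
    have hBcsum : -(dc * (1 + x t i)) * (∑ j ∈ Bᶜ, w t i j) ≤ ∑ j ∈ Bᶜ, f j := by
      rw [Finset.mul_sum]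
      exact Finset.sum_le_sum hBc_bound
    have h1xi : (0:ℝ) ≤ 1 + x t i := by linarith
    have hS : ∑ j ∈ Bᶜ, w t i j ≤ (∑ j ∈ B, w t i j) / γ :=
      (le_div_iff₀' hγpos).mpr (hbubble t i hiB)
    have hfin : (∑ j ∈ B, w t i j) * (c * (1 + x t i))
        ≥ dc * (1 + x t i) * (∑ j ∈ Bᶜ, w t i j) := by
      have h2 : dc * (1 + x t i) * (∑ j ∈ Bᶜ, w t i j)
          ≤ dc * (1 + x t i) * ((∑ j ∈ B, w t i j) / γ) :=
        mul_le_mul_of_nonneg_left hS (by positivity)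
      have h3 : dc * (1 + x t i) * ((∑ j ∈ B, w t i j) / γ)
          = (∑ j ∈ B, w t i j) * (c * (1 + x t i)) := by
        rw [hc_def]; ring
      linarith
    rw [hsplit]
    linarith [hBsum, hBcsum, hfin]

  clear_value c
  -- minimum over B
  have hBne : B.Nonempty := Finset.card_pos.mp (by omega)
  set m : ℕ → ℝ := fun t => B.inf' hBne (x t) with hm_def
  set β : ℕ → ℝ := fun t => min (m t) α₂ with hβ_def
  have hβle : ∀ t, β t ≤ α₂ := fun t => min_le_right _ _
  have hβlem : ∀ t, β t ≤ m t := fun t => min_le_left _ _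
  have hmle : ∀ t, ∀ j ∈ B, m t ≤ x t j := fun t j hj => Finset.inf'_le _ hj
  have hβ₀α₁ : α₁ < β t₀ := by
    apply lt_min _ hα₁α₂
    obtain ⟨i0, hi0, hmi0⟩ := Finset.exists_mem_eq_inf' hBne (x t₀)
    rw [hm_def]
    simp only []
    rw [hmi0]
    exact hinit i0 hi0
  have hβ₀pos : 0 < β t₀ := lt_trans hα₁pos hβ₀α₁
  -- one step preservation
  have ONESTEP : ∀ t, (∀ j ∈ B, β t₀ ≤ x t j) → ∀ i ∈ B, β t ≤ x (t+1) i := by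
    intro t hinv i hiB
    have hm_lb : β t₀ ≤ m t := Finset.le_inf' hBne _ hinv
    have hmpos : 0 < m t := lt_of_lt_of_le hβ₀pos hm_lb
    have hstep := STEP t i hiB (m t) hmpos.le
      (fun j hj => ⟨hmle t j hj, lt_of_lt_of_le hmpos (hmle t j hj)⟩)
    set W := ∑ j ∈ B, w t i j with hWdef
    have hW0' := hW0 t i
    have hW1' := hW1 t i
    have hmi : m t ≤ x t i := hmle t i hiB
    have hxi1 : x t i ≤ 1 := (hx t i).2
    have hm1 : m t ≤ 1 := le_trans hmi hxi1
    have hα₁m : α₁ ≤ m t := le_trans hβ₀α₁.le hm_lb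
    rw [hβ_def]
    simp only []
    rcases le_total (m t) α₂ with hcase | hcase
    · rw [min_eq_left hcase]
      have hcoef : W * (m t + c) ≤ 1 := by
        nlinarith [mul_nonneg (sub_nonneg.mpr hW1') (by linarith : (0:ℝ) ≤ m t + c)]
      have hid : x t i + W * (m t * (1 - x t i) - c * (1 + x t i)) - m t
          = (x t i - m t) * (1 - W * (m t + c)) + W * ((m t - α₁) * (α₂ - m t)) := by
        linear_combination (-(W * m t)) * hsum + W * hprod
      have ht1 : 0 ≤ (x t i - m t) * (1 - W * (m t + c)) :=
        mul_nonneg (by linarith) (by linarith)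
      have ht2 : 0 ≤ W * ((m t - α₁) * (α₂ - m t)) :=
        mul_nonneg hW0' (mul_nonneg (by linarith) (by linarith))
      linarith
    · rw [min_eq_right hcase]
      rcases le_total (W * (m t + c)) 1 with hc2 | hc2
      · have hid : x t i + W * (m t * (1 - x t i) - c * (1 + x t i)) - α₂
            = (x t i - m t) * (1 - W * (m t + c)) + (m t - α₂) * (2 - c - α₂ - m t)
              + (1 - W) * ((m t - α₁) * (m t - α₂)) := by
          linear_combination (m t - W * m t) * hsum + (W - 1) * hprod + hq2
        have ht1 : 0 ≤ (x t i - m t) * (1 - W * (m t + c)) :=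
          mul_nonneg (by linarith) (by linarith)
        have ht2 : 0 ≤ (m t - α₂) * (2 - c - α₂ - m t) :=
          mul_nonneg (by linarith) (by linarith)
        have ht3 : 0 ≤ (1 - W) * ((m t - α₁) * (m t - α₂)) :=
          mul_nonneg (by linarith) (mul_nonneg (by linarith) (by linarith))
        linarith
      · have hid : x t i + W * (m t * (1 - x t i) - c * (1 + x t i))
            = (1 - x t i) * (W * (m t + c) - 1) + 1 - 2 * W * c := by ring
        have ht1 : 0 ≤ (1 - x t i) * (W * (m t + c) - 1) :=
          mul_nonneg (by linarith) (by linarith)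
        have ht2 : 0 ≤ 2 * c * (1 - W) := by nlinarith
        linarith
  -- monotonicity of β from t₀ on
  have MONO : ∀ t, t₀ ≤ t → β t₀ ≤ β t := by
    refine Nat.le_induction le_rfl ?_
    intro t ht ih
    have hinv : ∀ j ∈ B, β t₀ ≤ x t j := fun j hj =>
      le_trans ih (le_trans (hβlem t) (hmle t j hj))
    have h1 : ∀ i ∈ B, β t ≤ x (t+1) i := ONESTEP t hinv
    have h2 : β t ≤ m (t+1) := Finset.le_inf' hBne _ h1
    exact le_trans ih (le_min h2 (hβle t))
  have BMONO : ∀ t, t₀ ≤ t → β t ≤ β (t+1) := by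
    intro t ht
    have hinv : ∀ j ∈ B, β t₀ ≤ x t j := fun j hj =>
      le_trans (MONO t ht) (le_trans (hβlem t) (hmle t j hj))
    have h1 : ∀ i ∈ B, β t ≤ x (t+1) i := ONESTEP t hinv
    exact le_min (Finset.le_inf' hBne _ h1) (hβle t)
  have BCHAIN : ∀ T t, t₀ ≤ T → T ≤ t → β T ≤ β t := by
    intro T t hT h
    induction t, h using Nat.le_induction with
    | base => exact le_rfl
    | succ t ht ih => exact le_trans ih (BMONO t (le_trans hT ht))

  -- contraction towards θ(β T)
  have CONTRACT : ∀ T, t₀ ≤ T → ∀ i ∈ B, ∀ ε : ℝ, 0 < ε →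
      ∀ᶠ t in atTop, (β T - c) / (β T + c) - ε ≤ x t i := by
    intro T hT i hiB ε hε
    have hμα₁ : α₁ < β T := lt_of_lt_of_le hβ₀α₁ (MONO T hT)
    have hμpos : 0 < β T := lt_trans hα₁pos hμα₁
    have hμα₂ : β T ≤ α₂ := hβle T
    have hκpos : 0 < β T + c := by linarith
    have hκ1 : β T + c ≤ 1 := by linarith
    have hθ1 : (β T - c) / (β T + c) ≤ 1 := by
      rw [div_le_one hκpos]; linarith
    -- recursion
    have hrec : ∀ t, T ≤ t → (β T - c) / (β T + c) - x (t+1) i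
        ≤ (1 - (∑ j ∈ B, w t i j) * (β T + c)) * ((β T - c) / (β T + c) - x t i) := by
      intro t ht
      have htt₀ : t₀ ≤ t := le_trans hT ht
      have hβt : β T ≤ β t := BCHAIN T t hT ht
      have hstep := STEP t i hiB (β T) hμpos.le (fun j hj =>
        ⟨le_trans hβt (le_trans (hβlem t) (hmle t j hj)),
         lt_of_lt_of_le hμpos (le_trans hβt (le_trans (hβlem t) (hmle t j hj)))⟩)
      have hkey : (β T - c) / (β T + c)
            - (x t i + (∑ j ∈ B, w t i j) * (β T * (1 - x t i) - c * (1 + x t i)))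
          = (1 - (∑ j ∈ B, w t i j) * (β T + c)) * ((β T - c) / (β T + c) - x t i) := by
        field_simp
        ring
      linarith [hstep]
    -- product bound
    have hprodbd : ∀ t, T ≤ t → (β T - c) / (β T + c) - x t i
        ≤ 2 * ∏ s ∈ Finset.Ico T t, (1 - (∑ j ∈ B, w s i j) * (β T + c)) := by
      refine Nat.le_induction ?_ ?_
      · simp only [Finset.Ico_self, Finset.prod_empty, mul_one]
        linarith [(hx T i).1]
      · intro t ht ih
        have hfac0 : 0 ≤ 1 - (∑ j ∈ B, w t i j) * (β T + c) := by
          nlinarith [hW0 t i, hW1 t i,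
            mul_nonneg (sub_nonneg.mpr (hW1 t i)) hκpos.le]
        rw [Finset.prod_Ico_succ_top ht]
        calc (β T - c) / (β T + c) - x (t+1) i
            ≤ (1 - (∑ j ∈ B, w t i j) * (β T + c)) * ((β T - c) / (β T + c) - x t i) :=
              hrec t ht
          _ ≤ (1 - (∑ j ∈ B, w t i j) * (β T + c))
              * (2 * ∏ s ∈ Finset.Ico T t, (1 - (∑ j ∈ B, w s i j) * (β T + c))) :=
              mul_le_mul_of_nonneg_left ih hfac0
          _ = 2 * ((∏ s ∈ Finset.Ico T t, (1 - (∑ j ∈ B, w s i j) * (β T + c)))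
              * (1 - (∑ j ∈ B, w t i j) * (β T + c))) := by ring
    -- exponential bound on the product
    have hexp : ∀ t, T ≤ t → ∏ s ∈ Finset.Ico T t, (1 - (∑ j ∈ B, w s i j) * (β T + c))
        ≤ Real.exp (-((β T + c) * ∑ s ∈ Finset.Ico T t, ∑ j ∈ B, w s i j)) := by
      intro t ht
      have h1 : ∏ s ∈ Finset.Ico T t, (1 - (∑ j ∈ B, w s i j) * (β T + c))
          ≤ ∏ s ∈ Finset.Ico T t, Real.exp (-((β T + c) * ∑ j ∈ B, w s i j)) := by
        apply Finset.prod_le_prod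
        · intro s _
          nlinarith [hW0 s i, hW1 s i,
            mul_nonneg (sub_nonneg.mpr (hW1 s i)) hκpos.le]
        · intro s _
          have := Real.add_one_le_exp (-((β T + c) * ∑ j ∈ B, w s i j))
          linarith
      rw [← Real.exp_sum] at h1
      have h2 : ∑ s ∈ Finset.Ico T t, -((β T + c) * ∑ j ∈ B, w s i j)
          = -((β T + c) * ∑ s ∈ Finset.Ico T t, ∑ j ∈ B, w s i j) := by
        rw [Finset.mul_sum, ← Finset.sum_neg_distrib]
      rw [h2] at h1
      exact h1
    -- tendsto of the exponential bound
    have htend : Tendsto (fun t => 2 * Real.exp (-((β T + c) *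
        ((∑ s ∈ Finset.range t, ∑ j ∈ B, w s i j) - ∑ s ∈ Finset.range T, ∑ j ∈ B, w s i j))))
        atTop (nhds 0) := by
      have h1 : Tendsto (fun t => (∑ s ∈ Finset.range t, ∑ j ∈ B, w s i j)
          - ∑ s ∈ Finset.range T, ∑ j ∈ B, w s i j) atTop atTop :=
        tendsto_atTop_add_const_right atTop _ (hconn i hiB)
      have h2 : Tendsto (fun t => -((β T + c) *
          ((∑ s ∈ Finset.range t, ∑ j ∈ B, w s i j)
            - ∑ s ∈ Finset.range T, ∑ j ∈ B, w s i j))) atTop atBot := by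
        have h1' : Tendsto (fun t => (β T + c) *
            ((∑ s ∈ Finset.range t, ∑ j ∈ B, w s i j)
              - ∑ s ∈ Finset.range T, ∑ j ∈ B, w s i j)) atTop atTop :=
          Tendsto.const_mul_atTop hκpos h1
        exact tendsto_neg_atTop_atBot.comp h1'
      have h3 := Real.tendsto_exp_atBot.comp h2
      have h4 := h3.const_mul (2:ℝ)
      simpa using h4
    have hev : ∀ᶠ t in atTop, 2 * Real.exp (-((β T + c) *
        ((∑ s ∈ Finset.range t, ∑ j ∈ B, w s i j)
          - ∑ s ∈ Finset.range T, ∑ j ∈ B, w s i j))) < ε :=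
      htend.eventually (gt_mem_nhds hε)
    filter_upwards [hev, eventually_ge_atTop T] with t h1 h2
    have h3 := hprodbd t h2
    have h4 := hexp t h2
    rw [Finset.sum_Ico_eq_sub _ h2] at h4
    nlinarith [h3, h4, h1]

  -- supremum of β over [t₀, ∞)
  have hbdd : BddAbove (Set.range fun k : ℕ => β (t₀ + k)) :=
    ⟨α₂, by rintro y ⟨k, rfl⟩; exact hβle _⟩
  set L : ℝ := ⨆ k : ℕ, β (t₀ + k) with hLdef
  have hβ_le_L : ∀ t, t₀ ≤ t → β t ≤ L := by
    intro t ht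
    have h : β t = β (t₀ + (t - t₀)) := by congr 1; omega
    rw [h]; exact le_ciSup hbdd _
  have hL_le : L ≤ α₂ := ciSup_le fun k => hβle _
  have hL_lb : β t₀ ≤ L := by
    have := le_ciSup hbdd 0
    simpa using this
  have hLpos : 0 < L := lt_of_lt_of_le hβ₀pos hL_lb
  have hLα₁ : α₁ < L := lt_of_lt_of_le hβ₀α₁ hL_lb
  have hLc : 0 < L + c := by linarith
  -- eventual lower bound θ(L) - ε
  have EVB : ∀ ε : ℝ, 0 < ε → ∀ i ∈ B, ∀ᶠ t in atTop, (L - c) / (L + c) - ε ≤ x t i := by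
    intro ε hε i hiB
    have hδ : L - ε * c / 4 < ⨆ k : ℕ, β (t₀ + k) := by
      rw [← hLdef]; nlinarith
    obtain ⟨k, hk⟩ := exists_lt_of_lt_ciSup hδ
    set T := t₀ + k with hTdef
    have hT : t₀ ≤ T := Nat.le_add_right _ _
    have hμL : β T ≤ L := hβ_le_L T hT
    have hμpos : 0 < β T := lt_of_lt_of_le hβ₀pos (MONO T hT)
    have hμc : 0 < β T + c := by linarith
    have hid : (L - c) / (L + c) - (β T - c) / (β T + c)
        = 2 * c * (L - β T) / ((L + c) * (β T + c)) := by
      field_simp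
      ring
    have hden : c * c ≤ (L + c) * (β T + c) := by nlinarith
    have hnum : 2 * c * (L - β T) ≤ ε * c * c / 2 := by nlinarith
    have hquot : 2 * c * (L - β T) / ((L + c) * (β T + c)) ≤ ε / 2 := by
      have h1 : 2 * c * (L - β T) / ((L + c) * (β T + c)) ≤ (ε * c * c / 2) / (c * c) :=
        div_le_div₀ (by positivity) hnum (by positivity) hden
      have h2 : (ε * c * c / 2) / (c * c) = ε / 2 := by field_simp
      linarith [h1, h2.le]
    have hcon := CONTRACT T hT i hiB (ε/2) (by linarith)
    filter_upwards [hcon] with t ht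
    have : (L - c)/(L + c) - ε/2 - ε/2 ≤ (β T - c)/(β T + c) - ε/2 := by linarith [hid ▸ hquot]
    linarith
  -- L = α₂ by fixed point argument
  have hLα₂ : α₂ ≤ L := by
    by_contra hcon
    push_neg at hcon
    have hnum : 0 < (L - α₁) * (α₂ - L) := mul_pos (by linarith) (by linarith)
    have hid2 : (L - c) - L * (L + c) = (L - α₁) * (α₂ - L) := by
      linear_combination (-L) * hsum + hprod
    set ε := (L - α₁) * (α₂ - L) / (L + c) / 3 with hεdef
    have hεpos : 0 < ε := by positivity
    have h3ε : L + 3 * ε ≤ (L - c) / (L + c) := by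
      have h0 : (L - c) / (L + c) - (L + 3 * ε) = 0 := by
        rw [hεdef]
        field_simp
        linear_combination (-L) * hsum + hprod
      linarith
    have hev : ∀ᶠ t in atTop, ∀ i ∈ B, (L - c) / (L + c) - ε ≤ x t i :=
      (Filter.eventually_all_finset B).mpr (fun i hi => EVB ε hεpos i hi)
    obtain ⟨t, ht1, ht2⟩ := (hev.and (eventually_ge_atTop t₀)).exists
    have hmt : L + 2 * ε ≤ m t := by
      apply Finset.le_inf' hBne
      intro j hj
      have := ht1 j hj
      linarith
    have hβt : β t ≤ L := hβ_le_L t ht2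
    have : min (m t) α₂ ≤ L := hβt
    rcases le_total (m t) α₂ with h | h
    · rw [min_eq_left h] at this; linarith
    · rw [min_eq_right h] at this; linarith
  have hLeq : L = α₂ := le_antisymm hL_le hLα₂
  -- conclusion
  intro i hiB
  have hθα₂ : (L - c) / (L + c) = α₂ := by
    rw [hLeq, div_eq_iff (by rw [hLeq] at hLc; linarith : α₂ + c ≠ 0)]
    linear_combination hq2
  have hcob : IsCoboundedUnder (· ≥ ·) atTop (fun t => x t i) :=
    (isBoundedUnder_of ⟨1, fun t => (hx t i).2⟩ : IsBoundedUnder (· ≤ ·) atTop _).isCoboundedUnder_ge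
  have hfin : ∀ ε : ℝ, 0 < ε → α₂ - ε ≤ Filter.liminf (fun t => x t i) atTop := by
    intro ε hε
    apply Filter.le_liminf_of_le hcob
    filter_upwards [EVB ε hε i hiB] with t ht
    rw [hθα₂] at ht
    linarith
  apply le_of_forall_pos_le_add
  intro ε hε
  linarith [hfin ε hε]
end

section
/- Fix nonnegative weights w_ij with w_ii = 0 and ∑_{j} w_ij ≤ 1 for every i, and non-increasing functions d̂_i : [0,1] → [0,1]. Define d'_i(a,b) = 1 if sgn(a) = sgn(b) and d'_i(a,b) = d̂_i(|a|) if sgn(a) ≠ sgn(b), and define f : [-1,1]^n → ℝ^n by f_i(y) = y_i + ∑_{j≠i} d'_i(y_i,y_j)·w_ij·|y_j|·(sgn(y_j) − y_i). Then f is non-decreasing: for any y¹, y² ∈ [-1,1]^n with y¹_j ≤ y²_j for every j, we have f_i(y¹) ≤ f_i(y²) for every i. -/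
open Finset

/-- Sign of a nonpositive number is not 1. -/
private lemma sign_ne_one_of_nonpos {a : ℝ} (h : a ≤ 0) : Real.sign a ≠ 1 := by
  rcases lt_or_eq_of_le h with h' | h'
  · rw [Real.sign_of_neg h']; norm_num
  · rw [h', Real.sign_zero]; norm_num

private lemma sign_ne_neg_one_of_nonneg {a : ℝ} (h : 0 ≤ a) : Real.sign a ≠ -1 := by
  rcases lt_or_eq_of_le h with h' | h'
  · rw [Real.sign_of_pos h']; norm_num
  · rw [← h', Real.sign_zero]; norm_num

/-- Lemma A: monotone in the second argument. -/
private lemma lemA (a d ww b₁ b₂ : ℝ) (ha : -1 ≤ a) (ha' : a ≤ 1)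
    (hd0 : 0 ≤ d) (hd1 : d ≤ 1) (hw : 0 ≤ ww) (hb : b₁ ≤ b₂) :
    (if Real.sign a = Real.sign b₁ then (1 : ℝ) else d) * ww * |b₁| * (Real.sign b₁ - a) ≤
    (if Real.sign a = Real.sign b₂ then (1 : ℝ) else d) * ww * |b₂| * (Real.sign b₂ - a) := by
  have hc1 : (0:ℝ) ≤ if Real.sign a = Real.sign b₁ then (1:ℝ) else d := by
    split_ifs <;> linarith
  have hc2 : (0:ℝ) ≤ if Real.sign a = Real.sign b₂ then (1:ℝ) else d := by
    split_ifs <;> linarith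
  have nonpos : ∀ c b : ℝ, 0 ≤ c → b ≤ 0 → c * ww * |b| * (Real.sign b - a) ≤ 0 := by
    intro c b hc hble
    rcases lt_or_eq_of_le hble with h' | h'
    · rw [Real.sign_of_neg h', abs_of_neg h']
      have h1 : (0:ℝ) ≤ c * ww * (-b) := by
        apply mul_nonneg (mul_nonneg hc hw); linarith
      nlinarith
    · simp [h']
  have nonneg : ∀ c b : ℝ, 0 ≤ c → 0 ≤ b → 0 ≤ c * ww * |b| * (Real.sign b - a) := by
    intro c b hc hble
    rcases lt_or_eq_of_le hble with h' | h'
    · rw [Real.sign_of_pos h', abs_of_pos h']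
      have h1 : (0:ℝ) ≤ c * ww * b := by positivity
      nlinarith
    · simp [← h']
  rcases lt_trichotomy b₂ 0 with h2 | h2 | h2
  · -- both negative
    have h1 : b₁ < 0 := lt_of_le_of_lt hb h2
    rw [Real.sign_of_neg h1, Real.sign_of_neg h2, abs_of_neg h1, abs_of_neg h2]
    set c := if Real.sign a = (-1:ℝ) then (1:ℝ) else d with hcdef
    have hc : 0 ≤ c := by rw [hcdef]; split_ifs <;> linarith
    have key : 0 ≤ (c * ww) * ((-1 - a) * (b₁ - b₂)) := by
      apply mul_nonneg (mul_nonneg hc hw)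
      nlinarith [mul_nonneg (by linarith : (0:ℝ) ≤ 1 + a) (by linarith : (0:ℝ) ≤ b₂ - b₁)]
    nlinarith [key]
  · -- b₂ = 0
    subst h2
    have := nonpos _ b₁ hc1 hb
    simpa using this
  · rcases le_or_gt b₁ 0 with h1 | h1
    · exact le_trans (nonpos _ b₁ hc1 h1) (nonneg _ b₂ hc2 h2.le)
    · -- both positive
      rw [Real.sign_of_pos h1, Real.sign_of_pos h2, abs_of_pos h1, abs_of_pos h2]
      set c := if Real.sign a = (1:ℝ) then (1:ℝ) else d with hcdef
      have hc : 0 ≤ c := by rw [hcdef]; split_ifs <;> linarith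
      have key : 0 ≤ (c * ww) * ((1 - a) * (b₂ - b₁)) := by
        apply mul_nonneg (mul_nonneg hc hw)
        apply mul_nonneg <;> linarith
      nlinarith [key]

/-- Lemma B: Lipschitz-type bound in the first argument. -/
private lemma lemB (dh : ℝ → ℝ)
    (hdr : ∀ x ∈ Set.Icc (0:ℝ) 1, dh x ∈ Set.Icc (0:ℝ) 1)
    (hmono : AntitoneOn dh (Set.Icc (0:ℝ) 1))
    (a₁ a₂ b ww : ℝ) (hw : 0 ≤ ww)
    (ha₁ : -1 ≤ a₁) (ha₂ : a₂ ≤ 1) (hb : -1 ≤ b) (hb' : b ≤ 1) (hle : a₁ ≤ a₂) :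
    (if Real.sign a₁ = Real.sign b then (1:ℝ) else dh |a₁|) * ww * |b| * (Real.sign b - a₁)
    - (if Real.sign a₂ = Real.sign b then (1:ℝ) else dh |a₂|) * ww * |b| * (Real.sign b - a₂)
    ≤ ww * (a₂ - a₁) := by
  have ha₁' : a₁ ≤ 1 := le_trans hle ha₂
  have ha₂' : -1 ≤ a₂ := le_trans ha₁ hle
  have hda : a₂ - a₁ ≥ 0 := by linarith
  rcases lt_trichotomy b 0 with hbn | hbz | hbp
  · -- b < 0 : sign b = -1, |b| = -b
    rw [Real.sign_of_neg hbn, abs_of_neg hbn]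
    rcases lt_or_ge a₂ 0 with h2 | h2
    · -- a₁ ≤ a₂ < 0: both conditions true
      have h1 : a₁ < 0 := lt_of_le_of_lt hle h2
      rw [if_pos (Real.sign_of_neg h1), if_pos (Real.sign_of_neg h2)]
      nlinarith [mul_nonneg hw hda, mul_nonneg (mul_nonneg hw hda) (by linarith : (0:ℝ) ≤ 1 + b)]
    · -- a₂ ≥ 0: cond₂ false
      have hd2 := hdr |a₂| ⟨abs_nonneg _, by rw [abs_of_nonneg h2]; linarith⟩
      rw [if_neg (fun h => sign_ne_neg_one_of_nonneg h2 h)]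
      rw [abs_of_nonneg h2] at hd2
      rw [abs_of_nonneg h2]
      rcases lt_or_ge a₁ 0 with h1 | h1
      · rw [if_pos (Real.sign_of_neg h1)]
        -- 1*ww*(-b)*(-1-a₁) - d₂*ww*(-b)*(-1-a₂) ≤ ww*(a₂-a₁)
        have k1 : 0 ≤ (1 - dh a₂) * (ww * (-b) * (1 + a₂)) := by
          apply mul_nonneg (by linarith [hd2.2])
          apply mul_nonneg (mul_nonneg hw (by linarith)) (by linarith)
        have k2 : 0 ≤ ww * (a₂ - a₁) * (1 + b) := by
          apply mul_nonneg (mul_nonneg hw hda) (by linarith)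
        nlinarith [k1, k2]
      · -- both ≥ 0: cond₁ false too
        have hd1 := hdr |a₁| ⟨abs_nonneg _, by rw [abs_of_nonneg h1]; linarith⟩
        rw [if_neg (fun h => sign_ne_neg_one_of_nonneg h1 h)]
        rw [abs_of_nonneg h1] at hd1
        rw [abs_of_nonneg h1]
        have hdd : dh a₂ ≤ dh a₁ :=
          hmono ⟨h1, by linarith⟩ ⟨h2, ha₂⟩ hle
        -- goal: d₁*ww*(-b)*(-1-a₁) - d₂*ww*(-b)*(-1-a₂) ≤ ww*(a₂-a₁)
        have k1 : 0 ≤ (dh a₁ - dh a₂) * (ww * (-b) * (1 + a₂)) := by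
          apply mul_nonneg (by linarith)
          apply mul_nonneg (mul_nonneg hw (by linarith)) (by linarith)
        have k2 : 0 ≤ ww * (a₂ - a₁) * (1 - dh a₁ * (-b)) := by
          apply mul_nonneg (mul_nonneg hw hda)
          nlinarith [hd1.1, hd1.2]
        nlinarith [k1, k2]
  · subst hbz
    simp only [abs_zero, mul_zero, zero_mul, sub_zero]
    exact mul_nonneg hw hda
  · -- b > 0 : sign b = 1, |b| = b
    rw [Real.sign_of_pos hbp, abs_of_pos hbp]
    rcases lt_or_ge 0 a₁ with h1 | h1
    · -- 0 < a₁ ≤ a₂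
      have h2 : 0 < a₂ := lt_of_lt_of_le h1 hle
      rw [if_pos (Real.sign_of_pos h1), if_pos (Real.sign_of_pos h2)]
      nlinarith [mul_nonneg hw hda, mul_nonneg (mul_nonneg hw hda) (by linarith : (0:ℝ) ≤ 1 - b)]
    · have hd1 := hdr |a₁| ⟨abs_nonneg _, by rw [abs_of_nonpos h1]; linarith⟩
      rw [if_neg (fun h => sign_ne_one_of_nonpos h1 h)]
      rw [abs_of_nonpos h1] at hd1
      rcases lt_or_ge 0 a₂ with h2 | h2
      · rw [if_pos (Real.sign_of_pos h2)]
        -- d₁*ww*b*(1-a₁) - 1*ww*b*(1-a₂) ≤ ww*(a₂-a₁)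
        have k1 : 0 ≤ (1 - dh (-a₁)) * (ww * b * (1 - a₁)) := by
          apply mul_nonneg (by linarith [hd1.2])
          apply mul_nonneg (mul_nonneg hw hbp.le) (by linarith)
        have k2 : 0 ≤ ww * (a₂ - a₁) * (1 - b) := by
          apply mul_nonneg (mul_nonneg hw hda) (by linarith)
        rw [abs_of_nonpos h1]
        nlinarith [k1, k2]
      · have hd2 := hdr |a₂| ⟨abs_nonneg _, by rw [abs_of_nonpos h2]; linarith⟩
        rw [if_neg (fun h => sign_ne_one_of_nonpos h2 h)]
        rw [abs_of_nonpos h2] at hd2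
        rw [abs_of_nonpos h1, abs_of_nonpos h2]
        have hdd : dh (-a₁) ≤ dh (-a₂) :=
          hmono ⟨by linarith, by linarith⟩ ⟨by linarith, by linarith⟩ (by linarith)
        have k1 : 0 ≤ (dh (-a₂) - dh (-a₁)) * (ww * b * (1 - a₁)) := by
          apply mul_nonneg (by linarith)
          apply mul_nonneg (mul_nonneg hw hbp.le) (by linarith)
        have k2 : 0 ≤ ww * (a₂ - a₁) * (1 - dh (-a₂) * b) := by
          apply mul_nonneg (mul_nonneg hw hda)
          nlinarith [hd2.1, hd2.2]
        nlinarith [k1, k2]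

/-- Lemma 2 of the paper: The auxiliary map
`fᵢ(y) = yᵢ + ∑_{j≠i} d'ᵢ(yᵢ,yⱼ)·wᵢⱼ·|yⱼ|·(sgn(yⱼ) − yᵢ)`, where `d'ᵢ(a,b)` equals 1 when
`sgn(a) = sgn(b)` and `d̂ᵢ(|a|)` otherwise (with each `d̂ᵢ : [0,1] → [0,1]` non-increasing),
is non-decreasing on `[-1,1]ⁿ` with respect to the element-wise order. -/
theorem auxiliary_map_monotone {n : ℕ} (hn : 2 ≤ n)
    (w : Fin n → Fin n → ℝ) (dhat : Fin n → ℝ → ℝ)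
    (hw0 : ∀ i j, 0 ≤ w i j)
    (hwdiag : ∀ i, w i i = 0)
    (hwsum : ∀ i, ∑ j, w i j ≤ 1)
    (hdhatrange : ∀ i, ∀ a ∈ Set.Icc (0 : ℝ) 1, dhat i a ∈ Set.Icc (0 : ℝ) 1)
    (hdhatmono : ∀ i, AntitoneOn (dhat i) (Set.Icc (0 : ℝ) 1))
    (y₁ y₂ : Fin n → ℝ)
    (hy₁ : ∀ j, y₁ j ∈ Set.Icc (-1 : ℝ) 1)
    (hy₂ : ∀ j, y₂ j ∈ Set.Icc (-1 : ℝ) 1)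
    (hle : ∀ j, y₁ j ≤ y₂ j) :
    ∀ i,
      y₁ i + ∑ j ∈ univ.erase i,
        (if Real.sign (y₁ i) = Real.sign (y₁ j) then (1 : ℝ) else dhat i |y₁ i|) *
          w i j * |y₁ j| * (Real.sign (y₁ j) - y₁ i) ≤
      y₂ i + ∑ j ∈ univ.erase i,
        (if Real.sign (y₂ i) = Real.sign (y₂ j) then (1 : ℝ) else dhat i |y₂ i|) *
          w i j * |y₂ j| * (Real.sign (y₂ j) - y₂ i) := by
  intro i
  have hd1 := hdhatrange i |y₁ i| ⟨abs_nonneg _, abs_le.2 ⟨(hy₁ i).1, (hy₁ i).2⟩⟩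
  -- Step 1: increase the off-diagonal coordinates
  have step1 :
      ∑ j ∈ univ.erase i,
        (if Real.sign (y₁ i) = Real.sign (y₁ j) then (1 : ℝ) else dhat i |y₁ i|) *
          w i j * |y₁ j| * (Real.sign (y₁ j) - y₁ i) ≤
      ∑ j ∈ univ.erase i,
        (if Real.sign (y₁ i) = Real.sign (y₂ j) then (1 : ℝ) else dhat i |y₁ i|) *
          w i j * |y₂ j| * (Real.sign (y₂ j) - y₁ i) := by
    apply Finset.sum_le_sum
    intro j _
    exact lemA (y₁ i) (dhat i |y₁ i|) (w i j) (y₁ j) (y₂ j)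
      (hy₁ i).1 (hy₁ i).2 hd1.1 hd1.2 (hw0 i j) (hle j)
  -- Step 2: increase the i-th coordinate
  have step2 : ∀ j ∈ univ.erase i,
      (if Real.sign (y₁ i) = Real.sign (y₂ j) then (1 : ℝ) else dhat i |y₁ i|) *
          w i j * |y₂ j| * (Real.sign (y₂ j) - y₁ i)
      - (if Real.sign (y₂ i) = Real.sign (y₂ j) then (1 : ℝ) else dhat i |y₂ i|) *
          w i j * |y₂ j| * (Real.sign (y₂ j) - y₂ i)
      ≤ w i j * (y₂ i - y₁ i) := by
    intro j _
    exact lemB (dhat i) (hdhatrange i) (hdhatmono i) (y₁ i) (y₂ i) (y₂ j) (w i j)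
      (hw0 i j) (hy₁ i).1 (hy₂ i).2 (hy₂ j).1 (hy₂ j).2 (hle i)
  have hsum : ∑ j ∈ univ.erase i, w i j * (y₂ i - y₁ i) ≤ y₂ i - y₁ i := by
    rw [← Finset.sum_mul]
    have h1 : ∑ j ∈ univ.erase i, w i j ≤ ∑ j, w i j := by
      apply Finset.sum_le_sum_of_subset_of_nonneg (Finset.subset_univ _)
      intro j _ _; exact hw0 i j
    have h2 := hwsum i
    nlinarith [sub_nonneg.2 (hle i)]
  have step2' :
      ∑ j ∈ univ.erase i,
        (if Real.sign (y₁ i) = Real.sign (y₂ j) then (1 : ℝ) else dhat i |y₁ i|) *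
          w i j * |y₂ j| * (Real.sign (y₂ j) - y₁ i)
      - ∑ j ∈ univ.erase i,
        (if Real.sign (y₂ i) = Real.sign (y₂ j) then (1 : ℝ) else dhat i |y₂ i|) *
          w i j * |y₂ j| * (Real.sign (y₂ j) - y₂ i)
      ≤ y₂ i - y₁ i := by
    rw [← Finset.sum_sub_distrib]
    exact le_trans (Finset.sum_le_sum step2) hsum
  linarith [step1, step2']
end

section
/- Under the PC dynamics whose discounting functions satisfy d_i(a,b) = 1 whenever sgn(a) = sgn(b) and d_i(a,b) ≤ d̂_i(|a|) whenever sgn(a) ≠ sgn(b), where each d̂_i : [0,1] → [0,1] is non-increasing, let B ⊆ V with |B| > 1 have bubble number γ_B, and let 0 < α₁ < α₂ < 1 be such that d̂_i(α)·(1+α) < γ_B·α·(1−α) for every i and every α ∈ (α₁,α₂). Define z(t) = min_{i∈B} x_i(t). Then for any time t, if α₁ < z(t) < α₂, it holds that z(t+1) ≥ z(t). -/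
open Finset

lemma key_arith (a z c γ WB WO : ℝ) (hz : 0 < z) (hza : z ≤ a) (ha : a ≤ 1)
    (hc0 : 0 ≤ c) (hc1 : c ≤ 1) (hWB : 0 ≤ WB) (hWO : 0 ≤ WO)
    (hsum : WB + WO ≤ 1) (hγ : γ * WO ≤ WB) (hkey : c * (1 + z) ≤ γ * (z * (1 - z))) :
    z ≤ a + z * (1 - a) * WB - c * (1 + a) * WO := by
  nlinarith [mul_nonneg (mul_nonneg hz.le (sub_nonneg.2 ha)) (sub_nonneg.2 hγ),
    mul_nonneg (sub_nonneg.2 hza) hWO,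
    mul_le_of_le_one_left hWO hc1,
    mul_nonneg (sub_nonneg.2 hza) (mul_nonneg hz.le hWO),
    mul_le_mul_of_nonneg_left hγ hz.le,
    mul_nonneg (sub_nonneg.2 hza) (sub_nonneg.2 hsum),
    mul_le_mul_of_nonneg_right hkey hWO,
    mul_nonneg (mul_nonneg (sub_nonneg.2 hza) hz.le) (sub_nonneg.2 hγ)]

/-- Step 1 of the proof of Theorem 1: Under the PC dynamics, with
discounting bounded by non-increasing `d̂ᵢ`, a bubble `B` with bubble number `γ`, and
`0 < α₁ < α₂ < 1` such that `d̂ᵢ(α)·(1+α) < γ·α·(1-α)` on `(α₁,α₂)`, the running minimum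
`z(t) = min_{i∈B} xᵢ(t)` satisfies: if `α₁ < z(t) < α₂` then `z(t+1) ≥ z(t)`. -/
theorem pc_min_nondecreasing_in_gap {n : ℕ} (hn : 2 ≤ n)
    (x : ℕ → Fin n → ℝ) (w : ℕ → Fin n → Fin n → ℝ)
    (d : Fin n → ℝ → ℝ → ℝ) (dhat : Fin n → ℝ → ℝ)
    (hx : ∀ t i, x t i ∈ Set.Icc (-1 : ℝ) 1)
    (hw0 : ∀ t i j, 0 ≤ w t i j)
    (hwdiag : ∀ t i, w t i i = 0)
    (hwsum : ∀ t i, ∑ j, w t i j ≤ 1)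
    (hdrange : ∀ i, ∀ a ∈ Set.Icc (-1 : ℝ) 1, ∀ b ∈ Set.Icc (-1 : ℝ) 1,
      d i a b ∈ Set.Icc (0 : ℝ) 1)
    (hdhatrange : ∀ i, ∀ a ∈ Set.Icc (0 : ℝ) 1, dhat i a ∈ Set.Icc (0 : ℝ) 1)
    (hdhatmono : ∀ i, AntitoneOn (dhat i) (Set.Icc (0 : ℝ) 1))
    (hdsame : ∀ i, ∀ a ∈ Set.Icc (-1 : ℝ) 1, ∀ b ∈ Set.Icc (-1 : ℝ) 1,
      Real.sign a = Real.sign b → d i a b = 1)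
    (hddiff : ∀ i, ∀ a ∈ Set.Icc (-1 : ℝ) 1, ∀ b ∈ Set.Icc (-1 : ℝ) 1,
      Real.sign a ≠ Real.sign b → d i a b ≤ dhat i |a|)
    (hdyn : ∀ t i, x (t + 1) i =
      x t i + ∑ j ∈ univ.erase i,
        d i (x t i) (x t j) * w t i j * |x t j| * (Real.sign (x t j) - x t i))
    (B : Finset (Fin n)) (hBcard : 1 < B.card) (hBne : B.Nonempty)
    (γ : ℝ)
    (hbubble : ∀ t, ∀ i ∈ B, γ * ∑ j ∈ Bᶜ, w t i j ≤ ∑ j ∈ B, w t i j)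
    (α₁ α₂ : ℝ) (hα₁pos : 0 < α₁) (hα₁α₂ : α₁ < α₂) (hα₂lt : α₂ < 1)
    (hsol : ∀ i, ∀ α ∈ Set.Ioo α₁ α₂, dhat i α * (1 + α) < γ * (α * (1 - α))) :
    ∀ t, α₁ < B.inf' hBne (x t) → B.inf' hBne (x t) < α₂ →
      B.inf' hBne (x t) ≤ B.inf' hBne (x (t + 1)) := by
  intro t hz1 hz2
  set z := B.inf' hBne (x t) with hzdef
  have hz0 : 0 < z := hα₁pos.trans hz1
  have hzle : ∀ i ∈ B, z ≤ x t i := fun i hi => Finset.inf'_le _ hi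
  have hz1' : z ≤ 1 := by
    obtain ⟨i0, hi0, hzeq⟩ := Finset.exists_mem_eq_inf' hBne (x t)
    rw [hzdef, hzeq]; exact (hx t i0).2
  have hzIcc : z ∈ Set.Icc (0:ℝ) 1 := ⟨hz0.le, hz1'⟩
  apply Finset.le_inf'
  intro i hi
  set a := x t i with hadef
  have haz : z ≤ a := hzle i hi
  have ha0 : 0 < a := hz0.trans_le haz
  have ha1 : a ≤ 1 := (hx t i).2
  have haIcc : a ∈ Set.Icc (0:ℝ) 1 := ⟨ha0.le, ha1⟩
  have haIcc' : a ∈ Set.Icc (-1:ℝ) 1 := hx t i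
  have hsigna : Real.sign a = 1 := Real.sign_of_pos ha0
  set c := dhat i z with hcdef
  have hc : c ∈ Set.Icc (0:ℝ) 1 := hdhatrange i z hzIcc
  have hmono : dhat i a ≤ c := hdhatmono i hzIcc haIcc haz
  set WB := ∑ j ∈ B.erase i, w t i j with hWBdef
  set WO := ∑ j ∈ Bᶜ, w t i j with hWOdef
  have hWB0 : 0 ≤ WB := Finset.sum_nonneg fun j _ => hw0 t i j
  have hWO0 : 0 ≤ WO := Finset.sum_nonneg fun j _ => hw0 t i j
  have hWBeq : WB = ∑ j ∈ B, w t i j := Finset.sum_erase B (hwdiag t i)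
  have hγW : γ * WO ≤ WB := hWBeq ▸ hbubble t i hi
  -- split of sum over univ.erase i
  have hsetsplit : (univ.erase i : Finset (Fin n)) = (B.erase i) ∪ Bᶜ := by
    ext j
    simp only [Finset.mem_erase, Finset.mem_union, Finset.mem_univ, Finset.mem_compl,
      and_true]
    constructor
    · intro hji
      by_cases hjB : j ∈ B
      · exact Or.inl ⟨hji, hjB⟩
      · exact Or.inr hjB
    · rintro (⟨hji, _⟩ | hjB)
      · exact hji
      · exact fun h => hjB (h ▸ hi)
  have hdisj : Disjoint (B.erase i) Bᶜ := by
    refine Finset.disjoint_left.2 fun j hj hj' => ?_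
    exact (Finset.mem_compl.1 hj') (Finset.mem_of_mem_erase hj)
  have hsplit : ∀ f : Fin n → ℝ, ∑ j ∈ univ.erase i, f j
      = ∑ j ∈ B.erase i, f j + ∑ j ∈ Bᶜ, f j := by
    intro f; rw [hsetsplit, Finset.sum_union hdisj]
  have hsumle : WB + WO ≤ 1 := by
    have := hsplit (w t i)
    have h2 : ∑ j ∈ univ.erase i, w t i j = ∑ j, w t i j :=
      Finset.sum_erase _ (hwdiag t i)
    rw [h2] at this
    rw [← this] at *
    exact le_trans (le_of_eq rfl) ((this ▸ (hwsum t i)))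
  -- bound on inner sums
  have hBsum : z * (1 - a) * WB ≤
      ∑ j ∈ B.erase i, d i a (x t j) * w t i j * |x t j| * (Real.sign (x t j) - a) := by
    rw [hWBdef, Finset.mul_sum]
    apply Finset.sum_le_sum
    intro j hj
    have hjB : j ∈ B := Finset.mem_of_mem_erase hj
    have hxj : z ≤ x t j := hzle j hjB
    have hxjpos : 0 < x t j := hz0.trans_le hxj
    have hsj : Real.sign (x t j) = 1 := Real.sign_of_pos hxjpos
    have hd1 : d i a (x t j) = 1 := hdsame i a haIcc' (x t j) (hx t j) (by rw [hsigna, hsj])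
    rw [hd1, hsj, abs_of_pos hxjpos]
    have : z * (1 - a) * w t i j ≤ x t j * (1 - a) * w t i j := by
      apply mul_le_mul_of_nonneg_right _ (hw0 t i j)
      exact mul_le_mul_of_nonneg_right hxj (by linarith)
    calc z * (1 - a) * w t i j ≤ x t j * (1 - a) * w t i j := this
      _ = 1 * w t i j * x t j * (1 - a) := by ring
  have hOsum : -(c * (1 + a)) * WO ≤
      ∑ j ∈ Bᶜ, d i a (x t j) * w t i j * |x t j| * (Real.sign (x t j) - a) := by
    rw [hWOdef, Finset.mul_sum]
    apply Finset.sum_le_sum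
    intro j _
    have hxjIcc := hx t j
    have hdj := hdrange i a haIcc' (x t j) hxjIcc
    have habs : |x t j| ≤ 1 := abs_le.2 ⟨hxjIcc.1, hxjIcc.2⟩
    have habs0 : 0 ≤ |x t j| := abs_nonneg _
    by_cases hs : Real.sign a = Real.sign (x t j)
    · have hsj : Real.sign (x t j) = 1 := by rw [← hs, hsigna]
      have hxjpos : 0 < x t j := by
        rcases lt_trichotomy (x t j) 0 with h | h | h
        · rw [Real.sign_of_neg h] at hsj; norm_num at hsj
        · rw [h, Real.sign_zero] at hsj; norm_num at hsj
        · exact h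
      have hd1 : d i a (x t j) = 1 := hdsame i a haIcc' (x t j) hxjIcc hs
      rw [hd1, hsj]
      have : 0 ≤ 1 * w t i j * |x t j| * (1 - a) :=
        mul_nonneg (mul_nonneg (by simpa using hw0 t i j) habs0) (by linarith)
      nlinarith [mul_nonneg (mul_nonneg hc.1 (by linarith : (0:ℝ) ≤ 1 + a)) (hw0 t i j)]
    · have hdle : d i a (x t j) ≤ c := by
        have := hddiff i a haIcc' (x t j) hxjIcc hs
        rw [abs_of_pos ha0] at this
        exact this.trans hmono
      have hsjge : -1 ≤ Real.sign (x t j) := by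
        rcases Real.sign_apply_eq (x t j) with h | h | h <;> rw [h] <;> norm_num
      have hsjle : Real.sign (x t j) ≤ 1 := by
        rcases Real.sign_apply_eq (x t j) with h | h | h <;> rw [h] <;> norm_num
      have hw := hw0 t i j
      nlinarith [mul_nonneg (mul_nonneg hdj.1 hw) habs0,
        mul_le_mul_of_nonneg_right hdle (mul_nonneg hw habs0),
        mul_nonneg hw habs0, mul_nonneg hc.1 hw,
        mul_le_mul_of_nonneg_left habs (mul_nonneg hc.1 hw)]
  -- conclude
  have hdynt := hdyn t i
  rw [hsplit] at hdynt
  have hfinal : z ≤ a + z * (1 - a) * WB - c * (1 + a) * WO :=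
    key_arith a z c γ WB WO hz0 haz ha1 hc.1 hc.2 hWB0 hWO0 hsumle hγW
      (le_of_lt (hsol i z ⟨hz1, hz2⟩))
  rw [hdynt]
  have := hOsum
  linarith
end

section
/- Under the PC dynamics whose discounting functions satisfy d_i(a,b) = 1 whenever sgn(a) = sgn(b) and d_i(a,b) ≤ d̂_i(|a|) whenever sgn(a) ≠ sgn(b), where each d̂_i : [0,1] → [0,1] is non-increasing, let B ⊆ V with |B| > 1 have bubble number γ_B, and let 0 < α₁ < α₂ < 1 be such that d̂_i(α)·(1+α) < γ_B·α·(1−α) for every i and every α ∈ (α₁,α₂). Define z(t) = min_{i∈B} x_i(t). Then for any time t, if z(t) ≥ α₂, it holds that z(t+1) ≥ α₂. -/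
open Finset Filter Topology

set_option maxHeartbeats 1000000 in
/-- Step 2 of the proof of Theorem 1: Under the PC dynamics, with
discounting bounded by non-increasing `d̂ᵢ`, a bubble `B` with bubble number `γ`, and
`0 < α₁ < α₂ < 1` such that `d̂ᵢ(α)·(1+α) < γ·α·(1-α)` on `(α₁,α₂)`, the running minimum
`z(t) = min_{i∈B} xᵢ(t)` satisfies: if `z(t) ≥ α₂` then `z(t+1) ≥ α₂`. -/
theorem pc_min_stays_above_alpha2 {n : ℕ} (hn : 2 ≤ n)
    (x : ℕ → Fin n → ℝ) (w : ℕ → Fin n → Fin n → ℝ)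
    (d : Fin n → ℝ → ℝ → ℝ) (dhat : Fin n → ℝ → ℝ)
    (hx : ∀ t i, x t i ∈ Set.Icc (-1 : ℝ) 1)
    (hw0 : ∀ t i j, 0 ≤ w t i j)
    (hwdiag : ∀ t i, w t i i = 0)
    (hwsum : ∀ t i, ∑ j, w t i j ≤ 1)
    (hdrange : ∀ i, ∀ a ∈ Set.Icc (-1 : ℝ) 1, ∀ b ∈ Set.Icc (-1 : ℝ) 1,
      d i a b ∈ Set.Icc (0 : ℝ) 1)
    (hdhatrange : ∀ i, ∀ a ∈ Set.Icc (0 : ℝ) 1, dhat i a ∈ Set.Icc (0 : ℝ) 1)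
    (hdhatmono : ∀ i, AntitoneOn (dhat i) (Set.Icc (0 : ℝ) 1))
    (hdsame : ∀ i, ∀ a ∈ Set.Icc (-1 : ℝ) 1, ∀ b ∈ Set.Icc (-1 : ℝ) 1,
      Real.sign a = Real.sign b → d i a b = 1)
    (hddiff : ∀ i, ∀ a ∈ Set.Icc (-1 : ℝ) 1, ∀ b ∈ Set.Icc (-1 : ℝ) 1,
      Real.sign a ≠ Real.sign b → d i a b ≤ dhat i |a|)
    (hdyn : ∀ t i, x (t + 1) i =
      x t i + ∑ j ∈ univ.erase i,
        d i (x t i) (x t j) * w t i j * |x t j| * (Real.sign (x t j) - x t i))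
    (B : Finset (Fin n)) (hBcard : 1 < B.card) (hBne : B.Nonempty)
    (γ : ℝ)
    (hbubble : ∀ t, ∀ i ∈ B, γ * ∑ j ∈ Bᶜ, w t i j ≤ ∑ j ∈ B, w t i j)
    (α₁ α₂ : ℝ) (hα₁pos : 0 < α₁) (hα₁α₂ : α₁ < α₂) (hα₂lt : α₂ < 1)
    (hsol : ∀ i, ∀ α ∈ Set.Ioo α₁ α₂, dhat i α * (1 + α) < γ * (α * (1 - α))) :
    ∀ t, α₂ ≤ B.inf' hBne (x t) → α₂ ≤ B.inf' hBne (x (t + 1)) := by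

  -- γ is positive
  have hα₂pos : (0:ℝ) < α₂ := hα₁pos.trans hα₁α₂
  have hγpos : 0 < γ := by
    obtain ⟨i0, hi0⟩ := hBne
    set α := (α₁ + α₂) / 2 with hα
    have hαmem : α ∈ Set.Ioo α₁ α₂ := ⟨by linarith, by linarith⟩
    have hα01 : α ∈ Set.Icc (0:ℝ) 1 := ⟨by linarith [hαmem.1], by linarith [hαmem.2]⟩
    have h1 := hsol i0 α hαmem
    have h2 := (hdhatrange i0 α hα01).1
    have hpos : 0 < α * (1 - α) := by nlinarith [hαmem.1, hαmem.2]
    nlinarith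
  -- key limit fact
  have hkey : ∀ i, dhat i α₂ * (1 + α₂) ≤ γ * (α₂ * (1 - α₂)) := by
    intro i
    have hmem2 : α₂ ∈ Set.Icc (0:ℝ) 1 := ⟨le_of_lt hα₂pos, le_of_lt hα₂lt⟩
    have hev : ∀ α ∈ Set.Ioo α₁ α₂, dhat i α₂ * (1 + α) ≤ γ * (α * (1 - α)) := by
      intro α hα
      have hα01 : α ∈ Set.Icc (0:ℝ) 1 := ⟨by linarith [hα.1], by linarith [hα.2]⟩
      have hmono := hdhatmono i hα01 hmem2 (le_of_lt hα.2)
      have h1 := hsol i α hα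
      nlinarith [hα.1]
    have hIoo : Set.Ioo α₁ α₂ ∈ 𝓝[<] α₂ := Ioo_mem_nhdsLT_of_mem ⟨hα₁α₂, le_refl _⟩
    refine le_of_tendsto_of_tendsto
      (f := fun α => dhat i α₂ * (1 + α)) (g := fun α => γ * (α * (1 - α)))
      (b := 𝓝[<] α₂) ?_ ?_ ?_
    · exact ((continuous_const.mul (continuous_const.add continuous_id)).tendsto α₂).mono_left
        nhdsWithin_le_nhds
    · exact ((continuous_const.mul (continuous_id.mul
        (continuous_const.sub continuous_id))).tendsto α₂).mono_left nhdsWithin_le_nhds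
    · exact Filter.eventually_of_mem hIoo hev
  intro t hz
  apply Finset.le_inf'
  intro i hi
  have hxj : ∀ j, j ∈ B → α₂ ≤ x t j := fun j hj => hz.trans (Finset.inf'_le _ hj)
  set a := x t i with hadef
  have haα₂ : α₂ ≤ a := hxj i hi
  have ha1 : a ≤ 1 := (hx t i).2
  have hapos : 0 < a := hα₂pos.trans_le haα₂
  have hsgna : Real.sign a = 1 := Real.sign_of_pos hapos
  set c := dhat i α₂ with hcdef
  have hmem2 : α₂ ∈ Set.Icc (0:ℝ) 1 := ⟨le_of_lt hα₂pos, le_of_lt hα₂lt⟩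
  have hc0 : 0 ≤ c := (hdhatrange i α₂ hmem2).1
  have hck : c * (1 + α₂) ≤ γ * (α₂ * (1 - α₂)) := hkey i
  set T : Fin n → ℝ := fun j =>
    d i (x t i) (x t j) * w t i j * |x t j| * (Real.sign (x t j) - x t i) with hT
  have hTi : T i = 0 := by simp [hT, hwdiag t i]
  -- bound for j ∈ B
  have hBbound : ∀ j ∈ B, w t i j * (α₂ * (1 - a)) ≤ T j := by
    intro j hj
    have hxjα : α₂ ≤ x t j := hxj j hj
    have hxjpos : 0 < x t j := hα₂pos.trans_le hxjα
    have hsgnj : Real.sign (x t j) = 1 := Real.sign_of_pos hxjpos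
    have hd1 : d i (x t i) (x t j) = 1 :=
      hdsame i _ (hx t i) _ (hx t j) (by rw [hsgnj]; exact hsgna)
    have habs : |x t j| = x t j := abs_of_pos hxjpos
    rw [hT]
    simp only [hd1, habs, hsgnj]
    have hw := hw0 t i j
    nlinarith [mul_le_mul_of_nonneg_left hxjα hw]
  -- bound for j ∈ Bᶜ
  have hObound : ∀ j ∈ Bᶜ, -(w t i j * (c * (1 + a))) ≤ T j := by
    intro j _
    have hw := hw0 t i j
    have habs0 : 0 ≤ |x t j| := abs_nonneg _
    have habs1 : |x t j| ≤ 1 := abs_le.mpr ⟨(hx t j).1, (hx t j).2⟩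
    by_cases hs : Real.sign (x t i) = Real.sign (x t j)
    · -- same sign: x t j > 0
      have hsgnj : Real.sign (x t j) = 1 := by rw [← hs, ← hadef, hsgna]
      have hxjpos : 0 < x t j := by
        rcases lt_trichotomy (x t j) 0 with h | h | h
        · rw [Real.sign_of_neg h] at hsgnj; norm_num at hsgnj
        · rw [h, Real.sign_zero] at hsgnj; norm_num at hsgnj
        · exact h
      have hd1 : d i (x t i) (x t j) = 1 := hdsame i _ (hx t i) _ (hx t j) hs
      have habs : |x t j| = x t j := abs_of_pos hxjpos
      rw [hT]
      simp only [hd1, habs, hsgnj]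
      have h1 : 0 ≤ w t i j * x t j * (1 - x t i) := by
        apply mul_nonneg (mul_nonneg hw hxjpos.le)
        have := (hx t i).2; linarith
      have h2 : 0 ≤ w t i j * (c * (1 + a)) :=
        mul_nonneg hw (mul_nonneg hc0 (by linarith))
      linarith
    · -- different sign
      have hd := hddiff i _ (hx t i) _ (hx t j) hs
      have habsa : |x t i| = a := abs_of_pos hapos
      rw [habsa] at hd
      have hda : d i (x t i) (x t j) ≤ c := by
        refine hd.trans (hdhatmono i hmem2 ⟨le_of_lt hapos, ha1⟩ haα₂)
      have hd0 : 0 ≤ d i (x t i) (x t j) := (hdrange i _ (hx t i) _ (hx t j)).1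
      have hsbound : -1 ≤ Real.sign (x t j) ∧ Real.sign (x t j) ≤ 1 := by
        rcases lt_trichotomy (x t j) 0 with h | h | h
        · rw [Real.sign_of_neg h]; norm_num
        · rw [h, Real.sign_zero]; norm_num
        · rw [Real.sign_of_pos h]; norm_num
      rw [hT]
      have h1a : (0:ℝ) ≤ 1 + a := by linarith
      have hdm0 : 0 ≤ d i (x t i) (x t j) * w t i j * |x t j| :=
        mul_nonneg (mul_nonneg hd0 hw) habs0
      have hle : -(1 + a) ≤ Real.sign (x t j) - x t i := by
        have := hsbound.1; rw [hadef] at *; linarith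
      have step1 : d i (x t i) (x t j) * w t i j * |x t j| * (-(1 + a)) ≤
          d i (x t i) (x t j) * w t i j * |x t j| * (Real.sign (x t j) - x t i) :=
        mul_le_mul_of_nonneg_left hle hdm0
      have hdmle : d i (x t i) (x t j) * |x t j| ≤ c :=
        (mul_le_of_le_one_right hd0 habs1).trans hda
      have step2 : d i (x t i) (x t j) * |x t j| * (w t i j * (1 + a)) ≤
          c * (w t i j * (1 + a)) :=
        mul_le_mul_of_nonneg_right hdmle (mul_nonneg hw h1a)
      beta_reduce
      nlinarith [step1, step2]
  -- sums
  set SB := ∑ j ∈ B, w t i j with hSB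
  set SO := ∑ j ∈ Bᶜ, w t i j with hSO
  have hSB0 : 0 ≤ SB := Finset.sum_nonneg fun j _ => hw0 t i j
  have hSO0 : 0 ≤ SO := Finset.sum_nonneg fun j _ => hw0 t i j
  have hsum1 : SB + SO ≤ 1 := by
    rw [hSB, hSO, Finset.sum_add_sum_compl]; exact hwsum t i
  have hbub := hbubble t i hi
  have hsplit : x (t + 1) i = a + (∑ j ∈ B, T j + ∑ j ∈ Bᶜ, T j) := by
    have e1 : x (t + 1) i = x t i + ∑ j ∈ univ.erase i, T j := hdyn t i
    have e2 : ∑ j ∈ univ.erase i, T j = ∑ j ∈ univ, T j := Finset.sum_erase _ hTi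
    have e3 : ∑ j ∈ B, T j + ∑ j ∈ Bᶜ, T j = ∑ j ∈ univ, T j :=
      Finset.sum_add_sum_compl B T
    rw [e1, e2, ← e3, hadef]
  have hsum2 : SB * (α₂ * (1 - a)) ≤ ∑ j ∈ B, T j := by
    rw [hSB, Finset.sum_mul]
    exact Finset.sum_le_sum hBbound
  have hsum3 : -(SO * (c * (1 + a))) ≤ ∑ j ∈ Bᶜ, T j := by
    rw [hSO, Finset.sum_mul, ← Finset.sum_neg_distrib]
    exact Finset.sum_le_sum hObound
  rw [hsplit]
  have hfin : α₂ ≤ a + (SB * (α₂ * (1 - a)) + -(SO * (c * (1 + a)))) := by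
    have h1 : 0 ≤ (a - α₂) * (1 - SB - SO) := by nlinarith
    have h2 : γ * SO * (a * (1 - α₂)) ≤ SB * (a * (1 - α₂)) := by
      have : 0 ≤ a * (1 - α₂) := by nlinarith
      nlinarith [mul_le_mul_of_nonneg_right hbub this]
    have h3 : SO * (c * (1 + α₂) * (1 + a)) ≤ SO * (γ * (α₂ * (1 - α₂)) * (1 + a)) := by
      have h1a : (0:ℝ) ≤ 1 + a := by linarith
      have := mul_le_mul_of_nonneg_right hck h1a
      nlinarith [mul_le_mul_of_nonneg_left this hSO0]
    have hpos : (0:ℝ) < 1 + α₂ := by linarith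
    have p1 : 0 ≤ (1 + α₂) * ((a - α₂) * (1 - SB - SO)) :=
      mul_nonneg (le_of_lt hpos) h1
    have p2 : (1 + α₂) * (γ * SO * (a * (1 - α₂))) ≤ (1 + α₂) * (SB * (a * (1 - α₂))) :=
      mul_le_mul_of_nonneg_left h2 (le_of_lt hpos)
    have hh4 : 0 ≤ SO * (a - α₂) := mul_nonneg hSO0 (sub_nonneg.mpr haα₂)
    have p4 : 0 ≤ γ * ((1 - α₂) * (SO * (a - α₂))) :=
      mul_nonneg (le_of_lt hγpos) (mul_nonneg (by linarith) hh4)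
    have p5 : 0 ≤ (1 + α₂) * (SO * (a - α₂)) := mul_nonneg (le_of_lt hpos) hh4
    nlinarith [p1, p2, h3, p4, p5, hpos]
  linarith
end

section
/- Under the PC dynamics whose discounting functions satisfy d_i(a,b) = 1 whenever sgn(a) = sgn(b) and d_i(a,b) ≤ d̂_i(|a|) whenever sgn(a) ≠ sgn(b), where each d̂_i : [0,1] → [0,1] is non-increasing, let B ⊆ V with |B| > 1 have bubble number γ_B. Let z* ∈ (0,1) and ε > 0 satisfy 0 < z* − ε, z* + ε < 1, and γ_B·(z*−ε)·(1−(z*+ε)) > d̂_i(z*−ε)·(1+z*+ε) for every agent i. Fix a time t and an agent i ∈ B, and suppose x_j(t) ≥ z* − ε for every j ∈ B. If x_i(t) ≥ z* + ε, then x_i(t+1) ≥ z* + ε. -/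
open Finset

set_option maxHeartbeats 1000000 in
/-- Step 5 of the proof of Theorem 1: Under the PC dynamics with
discounting bounded by non-increasing `d̂ᵢ`, in a bubble `B` with bubble number `γ`, if
`z* ∈ (0,1)`, `ε > 0`, `0 < z* − ε`, `z* + ε < 1`, and
`γ·(z*−ε)·(1−(z*+ε)) > d̂ᵢ(z*−ε)·(1+z*+ε)` for every `i`, then for an agent `i ∈ B` with
`xᵢ(t) ≥ z*+ε` whose fellow bubble members all satisfy `xⱼ(t) ≥ z*−ε`, we have
`xᵢ(t+1) ≥ z*+ε`. -/
theorem pc_stays_above_upper_band {n : ℕ} (hn : 2 ≤ n)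
    (x : ℕ → Fin n → ℝ) (w : ℕ → Fin n → Fin n → ℝ)
    (d : Fin n → ℝ → ℝ → ℝ) (dhat : Fin n → ℝ → ℝ)
    (hx : ∀ t i, x t i ∈ Set.Icc (-1 : ℝ) 1)
    (hw0 : ∀ t i j, 0 ≤ w t i j)
    (hwdiag : ∀ t i, w t i i = 0)
    (hwsum : ∀ t i, ∑ j, w t i j ≤ 1)
    (hdrange : ∀ i, ∀ a ∈ Set.Icc (-1 : ℝ) 1, ∀ b ∈ Set.Icc (-1 : ℝ) 1,
      d i a b ∈ Set.Icc (0 : ℝ) 1)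
    (hdhatrange : ∀ i, ∀ a ∈ Set.Icc (0 : ℝ) 1, dhat i a ∈ Set.Icc (0 : ℝ) 1)
    (hdhatmono : ∀ i, AntitoneOn (dhat i) (Set.Icc (0 : ℝ) 1))
    (hdsame : ∀ i, ∀ a ∈ Set.Icc (-1 : ℝ) 1, ∀ b ∈ Set.Icc (-1 : ℝ) 1,
      Real.sign a = Real.sign b → d i a b = 1)
    (hddiff : ∀ i, ∀ a ∈ Set.Icc (-1 : ℝ) 1, ∀ b ∈ Set.Icc (-1 : ℝ) 1,
      Real.sign a ≠ Real.sign b → d i a b ≤ dhat i |a|)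
    (hdyn : ∀ t i, x (t + 1) i =
      x t i + ∑ j ∈ univ.erase i,
        d i (x t i) (x t j) * w t i j * |x t j| * (Real.sign (x t j) - x t i))
    (B : Finset (Fin n)) (hBcard : 1 < B.card)
    (γ : ℝ)
    (hbubble : ∀ t, ∀ i ∈ B, γ * ∑ j ∈ Bᶜ, w t i j ≤ ∑ j ∈ B, w t i j)
    (zs ε : ℝ) (hzs : zs ∈ Set.Ioo (0 : ℝ) 1) (hε : 0 < ε)
    (hlow : 0 < zs - ε) (hhigh : zs + ε < 1)
    (hgap : ∀ i, dhat i (zs - ε) * (1 + (zs + ε)) < γ * ((zs - ε) * (1 - (zs + ε))))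
    (t : ℕ) (i : Fin n) (hi : i ∈ B)
    (hband : ∀ j ∈ B, zs - ε ≤ x t j)
    (hup : zs + ε ≤ x t i) :
    zs + ε ≤ x (t + 1) i := by

  have hx1 : x t i ≤ 1 := (hx t i).2
  have hzu : zs - ε ≤ 1 := by have := hzs.2; linarith
  have hzmem : zs - ε ∈ Set.Icc (0:ℝ) 1 := ⟨le_of_lt hlow, hzu⟩
  have hD0 : 0 ≤ dhat i (zs - ε) := (hdhatrange i _ hzmem).1
  have hD1 : dhat i (zs - ε) ≤ 1 := (hdhatrange i _ hzmem).2
  set a := x t i with ha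
  set D := dhat i (zs - ε) with hD
  have ha0 : 0 < a := by change 0 < x t i; linarith
  have hsa : Real.sign a = 1 := Real.sign_of_pos ha0
  set S := ∑ j ∈ B, w t i j with hS
  set W := ∑ j ∈ Bᶜ, w t i j with hW
  have hS0 : 0 ≤ S := Finset.sum_nonneg fun j _ => hw0 t i j
  have hW0 : 0 ≤ W := Finset.sum_nonneg fun j _ => hw0 t i j
  have hSW : S + W ≤ 1 := by
    have h1 : S + W = ∑ j, w t i j := Finset.sum_add_sum_compl B _
    linarith [hwsum t i]
  have hγW : γ * W ≤ S := hbubble t i hi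
  -- split the sum
  set f : Fin n → ℝ := fun j =>
    d i a (x t j) * w t i j * |x t j| * (Real.sign (x t j) - a) with hf
  have hdisj : Disjoint (B.erase i) Bᶜ := by
    refine Finset.disjoint_left.2 ?_
    intro j hj hj'
    exact (Finset.mem_compl.1 hj') (Finset.mem_of_mem_erase hj)
  have hsplit : univ.erase i = (B.erase i) ∪ Bᶜ := by
    ext j
    simp only [Finset.mem_erase, Finset.mem_univ, and_true, Finset.mem_union,
      Finset.mem_compl]
    constructor
    · intro hj
      by_cases hjB : j ∈ B
      · exact Or.inl ⟨hj, hjB⟩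
      · exact Or.inr hjB
    · rintro (⟨h, _⟩ | h)
      · exact h
      · rintro rfl; exact h hi
  have hsum : ∑ j ∈ univ.erase i, f j = ∑ j ∈ B.erase i, f j + ∑ j ∈ Bᶜ, f j := by
    rw [hsplit, Finset.sum_union hdisj]
  -- bound on the bubble part
  have hSe : ∑ j ∈ B.erase i, w t i j = S := by
    rw [hS]; exact Finset.sum_erase _ (hwdiag t i)
  have hB1 : (zs - ε) * (1 - a) * S ≤ ∑ j ∈ B.erase i, f j := by
    rw [← hSe, Finset.mul_sum]
    refine Finset.sum_le_sum fun j hj => ?_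
    have hjB : j ∈ B := Finset.mem_of_mem_erase hj
    have hxj : zs - ε ≤ x t j := hband j hjB
    have hxj0 : 0 < x t j := lt_of_lt_of_le hlow hxj
    have hsj : Real.sign (x t j) = 1 := Real.sign_of_pos hxj0
    have hdj : d i a (x t j) = 1 := hdsame i a (hx t i) (x t j) (hx t j) (by rw [hsa, hsj])
    have habs : |x t j| = x t j := abs_of_pos hxj0
    rw [hf]
    simp only [hdj, hsj, habs, one_mul]
    have hw := hw0 t i j
    have h1a : 0 ≤ 1 - a := by linarith
    nlinarith [mul_nonneg (mul_nonneg hw (sub_nonneg.2 hxj)) h1a]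
  -- bound on the outside part
  have hB2 : -(D * (1 + a)) * W ≤ ∑ j ∈ Bᶜ, f j := by
    rw [hW, Finset.mul_sum]
    refine Finset.sum_le_sum fun j hj => ?_
    have hw := hw0 t i j
    have hxjm := hx t j
    have h1a' : (0:ℝ) ≤ 1 + a := by linarith
    rcases lt_trichotomy (x t j) 0 with hneg | hzero | hpos
    · have hsj : Real.sign (x t j) = -1 := Real.sign_of_neg hneg
      have hne : Real.sign a ≠ Real.sign (x t j) := by rw [hsa, hsj]; norm_num
      have hdle : d i a (x t j) ≤ dhat i |a| := hddiff i a (hx t i) (x t j) (hx t j) hne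
      have haa : |a| = a := abs_of_pos ha0
      have hmono : dhat i a ≤ D := by
        rw [hD]
        exact hdhatmono i hzmem ⟨le_of_lt ha0, hx1⟩ (by linarith)
      have hdle2 : d i a (x t j) ≤ D := by rw [haa] at hdle; linarith
      have hd0 : 0 ≤ d i a (x t j) := (hdrange i a (hx t i) (x t j) (hx t j)).1
      have habs1 : |x t j| ≤ 1 := abs_le.2 ⟨hxjm.1, hxjm.2⟩
      have habs0 : 0 ≤ |x t j| := abs_nonneg _
      have h3 : d i a (x t j) * w t i j * |x t j| ≤ D * w t i j := by
        have := mul_le_mul (mul_le_mul_of_nonneg_right hdle2 hw) habs1 habs0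
          (mul_nonneg hD0 hw)
        linarith [this]
      have h4 : 0 ≤ (D * w t i j - d i a (x t j) * w t i j * |x t j|) * (1 + a) :=
        mul_nonneg (by linarith) h1a'
      rw [hf]
      simp only [hsj]
      nlinarith [h4]
    · rw [hf]
      simp only [hzero, abs_zero, Real.sign_zero, mul_zero, zero_mul]
      nlinarith [mul_nonneg (mul_nonneg hD0 h1a') hw]
    · have hsj : Real.sign (x t j) = 1 := Real.sign_of_pos hpos
      have hdj : d i a (x t j) = 1 := hdsame i a (hx t i) (x t j) (hx t j) (by rw [hsa, hsj])
      have habs : |x t j| = x t j := abs_of_pos hpos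
      rw [hf]
      simp only [hdj, hsj, habs, one_mul]
      have h1a : 0 ≤ 1 - a := by linarith
      nlinarith [mul_nonneg (mul_nonneg hD0 h1a') hw,
        mul_nonneg (mul_nonneg hw hpos.le) h1a]
  have hgapi := hgap i
  -- final arithmetic
  have key : zs + ε ≤ a + ((zs - ε) * (1 - a) * S + -(D * (1 + a)) * W) := by
    have h1 : 0 ≤ (a - (zs + ε)) * (1 - (zs - ε) * S - D * W) := by
      refine mul_nonneg (by linarith) ?_
      nlinarith [mul_nonneg (by linarith : (0:ℝ) ≤ 1 - (zs - ε)) hS0,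
        mul_nonneg (by linarith : (0:ℝ) ≤ 1 - D) hW0]
    have h2 : D * (1 + (zs + ε)) * W ≤ (zs - ε) * (1 - (zs + ε)) * S := by
      nlinarith [mul_le_mul_of_nonneg_right (le_of_lt hgapi) hW0,
        mul_le_mul_of_nonneg_left hγW
          (mul_nonneg (le_of_lt hlow) (by linarith : (0:ℝ) ≤ 1 - (zs + ε)))]
    nlinarith [h1, h2]
  have hstep : x (t + 1) i = a + ∑ j ∈ univ.erase i, f j := by
    simp only [hf, ha]
    exact hdyn t i
  linarith [key, hB1, hB2, hsum, hstep]
end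

section
/- Under the PC dynamics whose discounting functions satisfy d_i(a,b) = 1 whenever sgn(a) = sgn(b) and d_i(a,b) ≤ d̂_i(|a|) whenever sgn(a) ≠ sgn(b), where each d̂_i : [0,1] → [0,1] is non-increasing, let B ⊆ V with |B| > 1 be connected and have bubble number γ_B > 0. Let z* ∈ (0,1) and ε > 0 satisfy 0 < z* − ε, z* + ε < 1, and γ_B·(z*−ε)·(1−(z*+ε)) > d̂_i(z*−ε)·(1+z*+ε) for every agent i. Suppose there is a time T such that x_j(t) > z* − ε for every j ∈ B and every t > T. Then for every agent i ∈ B there exists a time t_i > T with x_i(t_i) > z* + ε. -/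
open Filter Finset

/-- Step 4 of the proof of Theorem 1: Under the PC dynamics with
discounting bounded by non-increasing `d̂ᵢ`, in a connected bubble `B` with bubble number
`γ > 0`, if `z* ∈ (0,1)`, `ε > 0`, `0 < z* − ε`, `z* + ε < 1`,
`γ·(z*−ε)·(1−(z*+ε)) > d̂ᵢ(z*−ε)·(1+z*+ε)` for every `i`, and after some time `T` all
opinions in `B` exceed `z*−ε`, then every agent `i ∈ B` exceeds `z*+ε` at some time after
`T`. -/
theorem pc_eventually_crosses_upper_band {n : ℕ} (hn : 2 ≤ n)
    (x : ℕ → Fin n → ℝ) (w : ℕ → Fin n → Fin n → ℝ)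
    (d : Fin n → ℝ → ℝ → ℝ) (dhat : Fin n → ℝ → ℝ)
    (hx : ∀ t i, x t i ∈ Set.Icc (-1 : ℝ) 1)
    (hw0 : ∀ t i j, 0 ≤ w t i j)
    (hwdiag : ∀ t i, w t i i = 0)
    (hwsum : ∀ t i, ∑ j, w t i j ≤ 1)
    (hdrange : ∀ i, ∀ a ∈ Set.Icc (-1 : ℝ) 1, ∀ b ∈ Set.Icc (-1 : ℝ) 1,
      d i a b ∈ Set.Icc (0 : ℝ) 1)
    (hdhatrange : ∀ i, ∀ a ∈ Set.Icc (0 : ℝ) 1, dhat i a ∈ Set.Icc (0 : ℝ) 1)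
    (hdhatmono : ∀ i, AntitoneOn (dhat i) (Set.Icc (0 : ℝ) 1))
    (hdsame : ∀ i, ∀ a ∈ Set.Icc (-1 : ℝ) 1, ∀ b ∈ Set.Icc (-1 : ℝ) 1,
      Real.sign a = Real.sign b → d i a b = 1)
    (hddiff : ∀ i, ∀ a ∈ Set.Icc (-1 : ℝ) 1, ∀ b ∈ Set.Icc (-1 : ℝ) 1,
      Real.sign a ≠ Real.sign b → d i a b ≤ dhat i |a|)
    (hdyn : ∀ t i, x (t + 1) i =
      x t i + ∑ j ∈ univ.erase i,
        d i (x t i) (x t j) * w t i j * |x t j| * (Real.sign (x t j) - x t i))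
    (B : Finset (Fin n)) (hBcard : 1 < B.card)
    (hconn : ∀ i ∈ B,
      Tendsto (fun T => ∑ t ∈ Finset.range T, ∑ j ∈ B, w t i j) atTop atTop)
    (γ : ℝ) (hγpos : 0 < γ)
    (hbubble : ∀ t, ∀ i ∈ B, γ * ∑ j ∈ Bᶜ, w t i j ≤ ∑ j ∈ B, w t i j)
    (zs ε : ℝ) (hzs : zs ∈ Set.Ioo (0 : ℝ) 1) (hε : 0 < ε)
    (hlow : 0 < zs - ε) (hhigh : zs + ε < 1)
    (hgap : ∀ i, dhat i (zs - ε) * (1 + (zs + ε)) < γ * ((zs - ε) * (1 - (zs + ε))))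
    (T : ℕ) (hT : ∀ t, T < t → ∀ j ∈ B, zs - ε < x t j) :
    ∀ i ∈ B, ∃ tᵢ, T < tᵢ ∧ zs + ε < x tᵢ i := by
  intro i hi
  by_contra hcon
  push_neg at hcon
  -- abbreviations
  set A : ℝ := (zs - ε) * (1 - (zs + ε)) with hAdef
  set K : ℝ := dhat i (zs - ε) with hKdef
  set D : ℝ := K * (1 + (zs + ε)) with hDdef
  have hzse1 : zs - ε ≤ 1 := by linarith [hzs.2]
  have hKmem := hdhatrange i (zs - ε) ⟨hlow.le, hzse1⟩
  have hK0 : 0 ≤ K := hKmem.1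
  have hD0 : 0 ≤ D := mul_nonneg hK0 (by linarith)
  have hApos : 0 < A := mul_pos hlow (by linarith)
  set c : ℝ := A - D / γ with hcdef
  have hc : 0 < c := by
    have h := hgap i
    have : D / γ < A := (div_lt_iff₀ hγpos).mpr (by rw [hDdef]; nlinarith)
    simp only [hcdef]; linarith
  -- step inequality
  have hstep : ∀ t, T < t →
      x t i + c * ∑ j ∈ B, w t i j ≤ x (t + 1) i := by
    intro t ht
    have hxi := hT t ht i hi
    have hxiub : x t i ≤ zs + ε := hcon t ht
    have hxipos : 0 < x t i := hlow.trans hxi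
    have hsgni : Real.sign (x t i) = 1 := Real.sign_of_pos hxipos
    set f : Fin n → ℝ := fun j =>
      d i (x t i) (x t j) * w t i j * |x t j| * (Real.sign (x t j) - x t i) with hf
    have hfi : f i = 0 := by simp [hf, hwdiag]
    have hsum : x (t + 1) i = x t i + ∑ j ∈ univ.erase i, f j := hdyn t i
    have hsum2 : ∑ j ∈ univ.erase i, f j = ∑ j ∈ B, f j + ∑ j ∈ Bᶜ, f j := by
      rw [Finset.sum_erase _ hfi, Finset.sum_add_sum_compl]
    have hB : ∀ j ∈ B, A * w t i j ≤ f j := by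
      intro j hj
      rcases eq_or_ne j i with rfl | hji
      · simp [hf, hwdiag]
      · have hxj := hT t ht j hj
        have hxjpos : 0 < x t j := hlow.trans hxj
        have hsgnj : Real.sign (x t j) = 1 := Real.sign_of_pos hxjpos
        have hd1 : d i (x t i) (x t j) = 1 :=
          hdsame i _ (hx t i) _ (hx t j) (by rw [hsgni, hsgnj])
        have habs : |x t j| = x t j := abs_of_pos hxjpos
        simp only [hf, hd1, hsgnj, habs, one_mul]
        have hw := hw0 t i j
        have hkey : (zs - ε) * (1 - (zs + ε)) ≤ x t j * (1 - x t i) :=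
          mul_le_mul hxj.le (by linarith) (by linarith) hxjpos.le
        nlinarith [mul_le_mul_of_nonneg_left hkey hw]
    have hBc : ∀ j ∈ Bᶜ, -(D * w t i j) ≤ f j := by
      intro j _
      have hw := hw0 t i j
      have hxj := hx t j
      have hdrg := hdrange i _ (hx t i) _ (hx t j)
      have hDw0 : 0 ≤ D * w t i j := mul_nonneg hD0 hw
      rcases lt_trichotomy (x t j) 0 with hneg | hzero | hpos
      · have hsgnj : Real.sign (x t j) = -1 := Real.sign_of_neg hneg
        have hdle : d i (x t i) (x t j) ≤ dhat i |x t i| :=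
          hddiff i _ (hx t i) _ (hx t j) (by rw [hsgni, hsgnj]; norm_num)
        have habsxi : |x t i| = x t i := abs_of_pos hxipos
        have hmono : dhat i (x t i) ≤ K :=
          hdhatmono i ⟨hlow.le, hzse1⟩ ⟨hxipos.le, by linarith⟩ hxi.le
        have hdleK : d i (x t i) (x t j) ≤ K := by
          rw [habsxi] at hdle; exact hdle.trans hmono
        have habsj : |x t j| ≤ 1 := abs_le.mpr ⟨hxj.1, hxj.2⟩
        have habsj0 : 0 ≤ |x t j| := abs_nonneg _
        simp only [hf, hsgnj]
        have h1 : |x t j| * (1 + x t i) ≤ 1 * (1 + (zs + ε)) :=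
          mul_le_mul habsj (by linarith) (by linarith) zero_le_one
        have h2 : w t i j * (|x t j| * (1 + x t i)) ≤ w t i j * (1 + (zs + ε)) := by
          calc w t i j * (|x t j| * (1 + x t i))
              ≤ w t i j * (1 * (1 + (zs + ε))) := mul_le_mul_of_nonneg_left h1 hw
            _ = w t i j * (1 + (zs + ε)) := by ring
        have h3 : d i (x t i) (x t j) * (w t i j * (|x t j| * (1 + x t i)))
            ≤ K * (w t i j * (1 + (zs + ε))) :=
          mul_le_mul hdleK h2
            (mul_nonneg hw (mul_nonneg habsj0 (by linarith))) hK0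
        nlinarith [h3]
      · simp only [hf, hzero, abs_zero, mul_zero, zero_mul]
        linarith
      · have hsgnj : Real.sign (x t j) = 1 := Real.sign_of_pos hpos
        have hd1 : d i (x t i) (x t j) = 1 :=
          hdsame i _ (hx t i) _ (hx t j) (by rw [hsgni, hsgnj])
        have habs : |x t j| = x t j := abs_of_pos hpos
        simp only [hf, hd1, hsgnj, habs, one_mul]
        have hnn : 0 ≤ w t i j * x t j * (1 - x t i) :=
          mul_nonneg (mul_nonneg hw hpos.le) (by linarith)
        linarith
    set S : ℝ := ∑ j ∈ B, w t i j with hSdef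
    set Wc : ℝ := ∑ j ∈ Bᶜ, w t i j with hWcdef
    have h1 : A * S ≤ ∑ j ∈ B, f j := by
      rw [hSdef, Finset.mul_sum]
      exact Finset.sum_le_sum hB
    have h2 : -(D * Wc) ≤ ∑ j ∈ Bᶜ, f j := by
      have := Finset.sum_le_sum hBc
      calc -(D * Wc) = ∑ j ∈ Bᶜ, -(D * w t i j) := by
            rw [hWcdef, Finset.mul_sum, ← Finset.sum_neg_distrib]
        _ ≤ ∑ j ∈ Bᶜ, f j := this
    have h3 : γ * Wc ≤ S := hbubble t i hi
    have h4 : D * Wc ≤ D / γ * S := by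
      rw [div_mul_eq_mul_div, le_div_iff₀ hγpos]
      calc D * Wc * γ = D * (γ * Wc) := by ring
        _ ≤ D * S := mul_le_mul_of_nonneg_left h3 hD0
    have hcS : c * S = A * S - D / γ * S := by rw [hcdef]; ring
    clear_value A K D c S Wc
    rw [hsum, hsum2]
    linarith
  -- growth by induction
  have hgrow : ∀ k, x (T + 1) i +
      c * ∑ s ∈ Finset.range k, ∑ j ∈ B, w (T + 1 + s) i j ≤ x (T + 1 + k) i := by
    intro k
    induction k with
    | zero => simp
    | succ k ih =>
      have h := hstep (T + 1 + k) (by omega)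
      have heq : T + 1 + (k + 1) = (T + 1 + k) + 1 := by omega
      rw [heq, Finset.sum_range_succ]
      have hma := mul_add c (∑ s ∈ Finset.range k, ∑ j ∈ B, w (T + 1 + s) i j)
        (∑ j ∈ B, w (T + 1 + k) i j)
      linarith
  -- divergence
  have hdiv : Tendsto
      (fun k => ∑ s ∈ Finset.range k, ∑ j ∈ B, w (T + 1 + s) i j) atTop atTop := by
    have hf := hconn i hi
    have hcomp : Tendsto
        (fun k => ∑ t ∈ Finset.range (T + 1 + k), ∑ j ∈ B, w t i j) atTop atTop := by
      have h1 : Tendsto (fun k : ℕ => T + 1 + k) atTop atTop := by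
        simpa [add_comm] using tendsto_add_atTop_nat (T + 1)
      exact hf.comp h1
    have heq : ∀ k, ∑ s ∈ Finset.range k, ∑ j ∈ B, w (T + 1 + s) i j
        = (∑ t ∈ Finset.range (T + 1 + k), ∑ j ∈ B, w t i j)
          + -(∑ t ∈ Finset.range (T + 1), ∑ j ∈ B, w t i j) := by
      intro k
      rw [Finset.sum_range_add]
      ring
    have := tendsto_atTop_add_const_right atTop
      (-(∑ t ∈ Finset.range (T + 1), ∑ j ∈ B, w t i j)) hcomp
    exact Tendsto.congr (fun k => (heq k).symm) this
  have hfinal : Tendsto (fun k => x (T + 1) i +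
      c * ∑ s ∈ Finset.range k, ∑ j ∈ B, w (T + 1 + s) i j) atTop atTop :=
    tendsto_atTop_add_const_left atTop _ (hdiv.const_mul_atTop hc)
  obtain ⟨k, hk⟩ := (hfinal.eventually_gt_atTop 1).exists
  have := hgrow k
  have hub := (hx (T + 1 + k) i).2
  linarith
end

section
/- Under the PC-lite dynamics, let B₁, …, B_m ⊆ V be pairwise disjoint connected subsets, where each B_k has bubble number γ_{B_k} > 3 + 2√2 with corresponding positive solutions α₁^k < α₂^k of (1+α)/(α(1−α)) = γ_{B_k}. Let s ∈ {−1,+1}^m, and suppose that for each k there is a time t₀ₖ such that: if s_k = +1 then x_i(t₀ₖ) > α₁^k for all i ∈ B_k, and if s_k = −1 then x_i(t₀ₖ) < −α₁^k for all i ∈ B_k. Then for each k: if s_k = +1, liminf_{t→∞} x_i(t) ≥ α₂^k for all i ∈ B_k, and if s_k = −1, limsup_{t→∞} x_i(t) ≤ −α₂^k for all i ∈ B_k. -/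
open Filter Finset

private lemma term_in {w a c xi : ℝ} (hw : 0 ≤ w) (hc : 0 < c) (ha : c ≤ a) (hxi : xi ≤ 1) :
    w * (c * (1 - xi)) ≤ w * |a| * (Real.sign a - xi) := by
  have hap : 0 < a := hc.trans_le ha
  rw [abs_of_pos hap, Real.sign_of_pos hap]
  nlinarith [mul_nonneg (mul_nonneg hw (sub_nonneg.2 ha)) (sub_nonneg.2 hxi)]

private lemma term_out {w a xi : ℝ} (hw : 0 ≤ w) (ha : |a| ≤ 1) (hxi : -1 ≤ xi) :
    -(w * (1 + xi)) ≤ w * |a| * (Real.sign a - xi) := by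
  have h0 : 0 ≤ |a| := abs_nonneg a
  have hs1 : -1 ≤ Real.sign a ∧ Real.sign a ≤ 1 := by
    rcases lt_trichotomy a 0 with h | h | h
    · rw [Real.sign_of_neg h]; norm_num
    · rw [h, Real.sign_zero]; norm_num
    · rw [Real.sign_of_pos h]; norm_num
  nlinarith [mul_nonneg hw (mul_nonneg (sub_nonneg.2 ha) (by linarith : (0:ℝ) ≤ 1 + xi)),
    mul_nonneg hw (mul_nonneg h0 (by linarith [hs1.1] : (0:ℝ) ≤ Real.sign a + 1))]

set_option maxHeartbeats 1000000 in
private lemma bubble_pos {n : ℕ} (x : ℕ → Fin n → ℝ) (w : ℕ → Fin n → Fin n → ℝ)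
    (hx : ∀ t i, x t i ∈ Set.Icc (-1 : ℝ) 1)
    (hw0 : ∀ t i j, 0 ≤ w t i j)
    (hwdiag : ∀ t i, w t i i = 0)
    (hwsum : ∀ t i, ∑ j, w t i j ≤ 1)
    (hdyn : ∀ t i, x (t + 1) i =
      x t i + ∑ j ∈ univ.erase i, w t i j * |x t j| * (Real.sign (x t j) - x t i))
    (B : Finset (Fin n)) (hB : B.Nonempty)
    (hconn : ∀ i ∈ B, Tendsto (fun T => ∑ t ∈ Finset.range T, ∑ j ∈ B, w t i j) atTop atTop)
    (γ : ℝ) (hγpos : 0 < γ)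
    (hbubble : ∀ t, ∀ i ∈ B, γ * ∑ j ∈ Bᶜ, w t i j ≤ ∑ j ∈ B, w t i j)
    (α₁ α₂ : ℝ) (hα₁pos : 0 < α₁) (hα₁α₂ : α₁ < α₂)
    (e₁ : 1 + α₁ = γ * (α₁ * (1 - α₁)))
    (e₂ : 1 + α₂ = γ * (α₂ * (1 - α₂)))
    (t₀ : ℕ) (hinit : ∀ i ∈ B, α₁ < x t₀ i) :
    ∀ ε > 0, ∃ T, ∀ t ≥ T, ∀ j ∈ B, α₂ - ε ≤ x t j := by
  have hα₂pos : 0 < α₂ := hα₁pos.trans hα₁α₂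
  have hα₂lt1 : α₂ < 1 := by
    by_contra h
    push_neg at h
    have h2 : γ * α₂ * (1 - α₂) ≤ 0 :=
      mul_nonpos_of_nonneg_of_nonpos (mul_pos hγpos hα₂pos).le (by linarith)
    nlinarith
  -- Vieta
  have hsum : γ * (1 - α₁ - α₂) = 1 := by
    have hne : α₁ - α₂ ≠ 0 := by intro h; nlinarith
    have key : (α₁ - α₂) * (γ * (1 - α₁ - α₂) - 1) = 0 := by linear_combination e₂ - e₁
    rcases mul_eq_zero.1 key with h | h
    · exact absurd h hne
    · linarith
  have hprod : γ * (α₁ * α₂) = 1 := by linear_combination -e₁ - α₁ * hsum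
  have gfact : ∀ c : ℝ, γ * (c * (1 - c)) - (1 + c) = γ * ((c - α₁) * (α₂ - c)) := by
    intro c; linear_combination c * hsum + hprod
  -- weights
  have hWnn : ∀ t i, (0:ℝ) ≤ ∑ j ∈ B, w t i j := fun t i =>
    Finset.sum_nonneg fun j _ => hw0 t i j
  have hW1 : ∀ t i, (∑ j ∈ B, w t i j) ≤ 1 := fun t i =>
    le_trans (Finset.sum_le_sum_of_subset_of_nonneg (Finset.subset_univ B)
      (fun j _ _ => hw0 t i j)) (hwsum t i)
  -- one-step lower bound
  have stepBound : ∀ t, ∀ i ∈ B, ∀ c : ℝ, 0 < c → (∀ j ∈ B, c ≤ x t j) →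
      γ * x t i + (∑ j ∈ B, w t i j) * (γ * (c * (1 - x t i)) - (1 + x t i))
        ≤ γ * x (t + 1) i := by
    intro t i hi c hc hcx
    have hxi := hx t i
    have hsum_all : ∑ j ∈ univ.erase i, w t i j * |x t j| * (Real.sign (x t j) - x t i)
        = ∑ j, w t i j * |x t j| * (Real.sign (x t j) - x t i) :=
      Finset.sum_erase _ (by rw [hwdiag]; ring)
    have hall : x (t+1) i = x t i + (∑ j ∈ B, w t i j * |x t j| * (Real.sign (x t j) - x t i))
        + ∑ j ∈ Bᶜ, w t i j * |x t j| * (Real.sign (x t j) - x t i) := by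
      rw [hdyn t i, hsum_all, ← Finset.sum_add_sum_compl B
        (fun j => w t i j * |x t j| * (Real.sign (x t j) - x t i))]
      ring
    have hBlb : (∑ j ∈ B, w t i j) * (c * (1 - x t i))
        ≤ ∑ j ∈ B, w t i j * |x t j| * (Real.sign (x t j) - x t i) := by
      rw [Finset.sum_mul]
      exact Finset.sum_le_sum fun j hj => term_in (hw0 t i j) hc (hcx j hj) hxi.2
    have hClb : -((∑ j ∈ Bᶜ, w t i j) * (1 + x t i))
        ≤ ∑ j ∈ Bᶜ, w t i j * |x t j| * (Real.sign (x t j) - x t i) := by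
      rw [Finset.sum_mul, ← Finset.sum_neg_distrib]
      refine Finset.sum_le_sum fun j hj => term_out (hw0 t i j) ?_ hxi.1
      exact abs_le.2 ⟨(hx t j).1, (hx t j).2⟩
    have hE := hbubble t i hi
    have h1X : (0:ℝ) ≤ 1 + x t i := by linarith [hxi.1]
    have hEx : γ * ((∑ j ∈ Bᶜ, w t i j) * (1 + x t i))
        ≤ (∑ j ∈ B, w t i j) * (1 + x t i) := by
      have := mul_le_mul_of_nonneg_right hE h1X
      linarith [this]
    have h2 := mul_le_mul_of_nonneg_left hBlb hγpos.le
    have h3 := mul_le_mul_of_nonneg_left hClb hγpos.le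
    nlinarith [h2, h3, hEx, hall]
  -- single-step persistence
  have persistStep : ∀ t, ∀ i ∈ B, ∀ c d : ℝ, 0 < c → c ≤ d →
      1 + d ≤ γ * (c * (1 - d)) → (∀ j ∈ B, c ≤ x t j) → d ≤ x t i → d ≤ x (t+1) i := by
    intro t i hi c d hc hcd hρ hcx hdx
    have hxi := hx t i
    have hsb := stepBound t i hi c hc hcx
    set W := ∑ j ∈ B, w t i j with hW
    have hW0 := hWnn t i
    have hWle := hW1 t i
    have hd1 : d < 1 := by nlinarith [mul_pos hγpos hc]
    have hc1 : c < 1 := lt_of_le_of_lt hcd hd1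
    have hγc : γ * c + 1 ≤ γ := by nlinarith [mul_pos hγpos hc]
    have hslope : W * (γ * c + 1) ≤ γ := by nlinarith [mul_pos hγpos hc]
    have hρ' : 0 ≤ γ * (c * (1 - d)) - (1 + d) := by linarith
    have key : γ * d ≤ γ * x t i + W * (γ * (c * (1 - x t i)) - (1 + x t i)) := by
      nlinarith [mul_nonneg hW0 hρ', mul_nonneg (sub_nonneg.2 hdx) (sub_nonneg.2 hslope)]
    have := key.trans hsb
    exact le_of_mul_le_mul_left this hγpos
  -- persistence over time
  have invariant : ∀ c : ℝ, 0 < c → 1 + c ≤ γ * (c * (1 - c)) → ∀ T,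
      (∀ j ∈ B, c ≤ x T j) → ∀ t, T ≤ t → ∀ j ∈ B, c ≤ x t j := by
    intro c hc hgc T hT t ht
    induction t, ht using Nat.le_induction with
    | base => exact hT
    | succ t ht ih => exact fun j hj => persistStep t j hj c c hc le_rfl hgc ih (ih j hj)
  -- growth step
  have growthStep : ∀ t, ∀ i ∈ B, ∀ c d : ℝ, 0 < c → (∀ j ∈ B, c ≤ x t j) → x t i ≤ d →
      γ * x t i + (∑ j ∈ B, w t i j) * (γ * (c * (1 - d)) - (1 + d)) ≤ γ * x (t+1) i := by
    intro t i hi c d hc hcx hxd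
    have hsb := stepBound t i hi c hc hcx
    have hW0 := hWnn t i
    have : (∑ j ∈ B, w t i j) * (γ * (c * (1 - d)) - (1 + d))
        ≤ (∑ j ∈ B, w t i j) * (γ * (c * (1 - x t i)) - (1 + x t i)) := by
      apply mul_le_mul_of_nonneg_left _ hW0
      nlinarith [mul_pos hγpos hc]
    linarith
  -- reach lemma
  have reach : ∀ c d : ℝ, 0 < c → c ≤ d → 1 + d < γ * (c * (1 - d)) → ∀ T,
      (∀ t, T ≤ t → ∀ j ∈ B, c ≤ x t j) → ∀ i ∈ B, ∃ T', ∀ t, T' ≤ t → d ≤ x t i := by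
    intro c d hc hcd hρ T hinv i hi
    set κ := γ * (c * (1 - d)) - (1 + d) with hκ
    have hκpos : 0 < κ := by linarith
    set S : ℕ → ℝ := fun T => ∑ t ∈ Finset.range T, ∑ j ∈ B, w t i j with hS
    have hreach1 : ∃ t₁, T ≤ t₁ ∧ d ≤ x t₁ i := by
      by_contra hcon
      push_neg at hcon
      have hlt : ∀ t, T ≤ t → x t i < d := fun t ht => hcon t ht
      have hacc : ∀ t, T ≤ t → γ * x T i + κ * (S t - S T) ≤ γ * x t i := by
        intro t ht
        induction t, ht using Nat.le_induction with
        | base => simp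
        | succ t ht ih =>
          have hg := growthStep t i hi c d hc (hinv t ht) (hlt t ht).le
          rw [← hκ] at hg
          have hst : S (t+1) = S t + ∑ j ∈ B, w t i j := Finset.sum_range_succ _ t
          have hc2 : κ * (S (t+1) - S T) = κ * (S t - S T) + κ * (∑ j ∈ B, w t i j) := by
            rw [hst]; ring
          have : κ * (∑ j ∈ B, w t i j) = (∑ j ∈ B, w t i j) * κ := mul_comm _ _
          linarith
      obtain ⟨t, hts, htT⟩ := (((hconn i hi).eventually_ge_atTop (S T + 2 * γ / κ + 1)).and
        (eventually_ge_atTop T)).exists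
      have h1 := hacc t htT
      have h2 : κ * (2 * γ / κ) = 2 * γ := mul_div_cancel₀ _ (ne_of_gt hκpos)
      have h3 : κ * (S t - S T) ≥ κ * (2 * γ / κ + 1) :=
        mul_le_mul_of_nonneg_left (by linarith) hκpos.le
      have hx1 : x t i ≤ 1 := (hx t i).2
      have hxT : -1 ≤ x T i := (hx T i).1
      nlinarith [mul_le_mul_of_nonneg_left hx1 hγpos.le, mul_le_mul_of_nonneg_left hxT hγpos.le]
    obtain ⟨t₁, ht₁T, ht₁⟩ := hreach1
    refine ⟨t₁, fun t ht => ?_⟩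
    induction t, ht using Nat.le_induction with
    | base => exact ht₁
    | succ t ht ih =>
      exact persistStep t i hi c d hc hcd hρ.le (hinv t (ht₁T.trans ht)) ih
  -- initial bound
  set c₀ : ℝ := min (B.inf' hB fun i => x t₀ i) α₂ with hc₀def
  have hc₀le : ∀ j ∈ B, c₀ ≤ x t₀ j := fun j hj =>
    le_trans (min_le_left _ _) (Finset.inf'_le _ hj)
  have hc₀gt : α₁ < c₀ := lt_min (by
      rw [Finset.lt_inf'_iff]; exact fun i hi => hinit i hi) hα₁α₂
  have hc₀pos : 0 < c₀ := hα₁pos.trans hc₀gt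
  have hc₀α₂ : c₀ ≤ α₂ := min_le_right _ _
  have hgnn : ∀ c : ℝ, α₁ ≤ c → c ≤ α₂ → 1 + c ≤ γ * (c * (1 - c)) := by
    intro c h1 h2
    nlinarith [gfact c, mul_nonneg (mul_nonneg hγpos.le (sub_nonneg.2 h1)) (sub_nonneg.2 h2)]
  intro ε hε
  set δ : ℝ := γ * (c₀ - α₁) * ε / (2 * (γ + 1)) with hδdef
  have hδpos : 0 < δ :=
    div_pos (mul_pos (mul_pos hγpos (sub_pos.2 hc₀gt)) hε) (by linarith)
  -- main induction
  have S : ∀ k : ℕ, ∃ T, ∀ t, T ≤ t → ∀ j ∈ B, min (c₀ + k * δ) (α₂ - ε) ≤ x t j := by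
    intro k
    induction k with
    | zero =>
      refine ⟨t₀, fun t ht j hj => ?_⟩
      have h := invariant c₀ hc₀pos (hgnn c₀ hc₀gt.le hc₀α₂) t₀ hc₀le t ht j hj
      have h2 : min (c₀ + ((0:ℕ):ℝ) * δ) (α₂ - ε) ≤ c₀ := by
        simpa using min_le_left (c₀ + ((0:ℕ):ℝ) * δ) (α₂ - ε)
      exact le_trans h2 h
    | succ k ih =>
      obtain ⟨T, hT⟩ := ih
      have hcast : (((k+1:ℕ)):ℝ) = (k:ℝ) + 1 := by push_cast; ring
      by_cases hcase : α₂ - ε ≤ c₀ + (k:ℝ) * δ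
      · refine ⟨T, fun t ht j hj => le_trans (min_le_right _ _) ?_⟩
        have h := hT t ht j hj
        rwa [min_eq_right hcase] at h
      · push_neg at hcase
        set c : ℝ := c₀ + (k:ℝ) * δ with hcdef
        have hcmin : min (c₀ + (k:ℝ) * δ) (α₂ - ε) = c := min_eq_left hcase.le
        set d : ℝ := min (c₀ + ((k:ℝ) + 1) * δ) (α₂ - ε) with hddef
        have hc₀c : c₀ ≤ c := by
          have h0 : (0:ℝ) ≤ (k:ℝ) * δ := mul_nonneg (Nat.cast_nonneg k) hδpos.le
          rw [hcdef]; linarith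
        have hcpos : 0 < c := lt_of_lt_of_le hc₀pos hc₀c
        have hcd : c ≤ d := by
          rw [hddef, hcdef]
          exact le_min (by linarith [hδpos]) hcase.le
        have hdc : d ≤ c + δ := by
          rw [hddef, hcdef]
          exact le_trans (min_le_left _ _) (le_of_eq (by ring))
        have hc1 : c < 1 := by
          have : c < α₂ - ε := hcase
          linarith
        have hα₁c : α₁ < c := lt_of_lt_of_le hc₀gt hc₀c
        have hγ1 : (0:ℝ) < γ + 1 := by linarith
        have hstrict : 1 + d < γ * (c * (1 - d)) := by
          have hg := gfact c
          have hφeq : γ * (c * (1 - d)) - (1 + d)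
              = γ * ((c - α₁) * (α₂ - c)) - (d - c) * (γ * c + 1) := by
            rw [← hg]; ring
          have h2 : γ * (c₀ - α₁) * ε = 2 * δ * (γ + 1) := by
            rw [hδdef]; field_simp
          have h1 : 2 * δ * (γ + 1) ≤ γ * ((c - α₁) * (α₂ - c)) := by
            rw [← h2]
            nlinarith [mul_nonneg hγpos.le (mul_nonneg (sub_nonneg.2 hα₁c.le)
                (by linarith : (0:ℝ) ≤ α₂ - c - ε)),
              mul_nonneg hγpos.le (mul_nonneg (sub_nonneg.2 hc₀c) hε.le)]
          have hγc1 : (0:ℝ) < γ * c + 1 := by positivity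
          have h3 : (d - c) * (γ * c + 1) ≤ δ * (γ + 1) := by
            nlinarith [mul_nonneg (by linarith : (0:ℝ) ≤ δ - (d - c)) hγc1.le,
              mul_nonneg hδpos.le (mul_nonneg hγpos.le (by linarith : (0:ℝ) ≤ 1 - c))]
          have h4 : 0 < δ * (γ + 1) := mul_pos hδpos hγ1
          linarith
        have hinv : ∀ t, T ≤ t → ∀ j ∈ B, c ≤ x t j := by
          intro t ht j hj
          have h := hT t ht j hj
          rwa [hcmin] at h
        have hreach := reach c d hcpos hcd hstrict T hinv
        choose! f hf using hreach
        refine ⟨B.sup f, fun t ht j hj => ?_⟩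
        have hgoal : d ≤ x t j := hf j hj t (le_trans (Finset.le_sup hj) ht)
        rw [hcast]
        exact hgoal
  obtain ⟨k, hk⟩ := exists_nat_ge ((α₂ - ε - c₀) / δ)
  obtain ⟨T, hT⟩ := S k
  refine ⟨T, fun t ht j hj => ?_⟩
  have hkδ : α₂ - ε - c₀ ≤ k * δ := by
    rw [div_le_iff₀ hδpos] at hk; linarith
  have : min (c₀ + k * δ) (α₂ - ε) = α₂ - ε := min_eq_right (by linarith)
  have h := hT t ht j hj
  rwa [this] at h


/-- Remark 1 of the paper: Under the PC-lite dynamics, with `m` pairwise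
disjoint connected bubbles `B₁,…,B_m`, each with bubble number `γ_k > 3 + 2√2` and
corresponding positive solutions `α₁ᵏ < α₂ᵏ` of `(1+α)/(α(1-α)) = γ_k`, and a sign pattern
`s ∈ {−1,+1}^m` such that for each `k` at some time `t₀ₖ` the opinions in `B_k` all exceed
`α₁ᵏ` (if `s_k = +1`) or are all below `−α₁ᵏ` (if `s_k = −1`), then for each `k` the
liminf of every member of `B_k` is ≥ `α₂ᵏ` (if `s_k = +1`), resp. the limsup is ≤ `−α₂ᵏ`
(if `s_k = −1`). -/
theorem pc_lite_multiple_bubbles {n m : ℕ} (hn : 2 ≤ n)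
    (x : ℕ → Fin n → ℝ) (w : ℕ → Fin n → Fin n → ℝ)
    (hx : ∀ t i, x t i ∈ Set.Icc (-1 : ℝ) 1)
    (hw0 : ∀ t i j, 0 ≤ w t i j)
    (hwdiag : ∀ t i, w t i i = 0)
    (hwsum : ∀ t i, ∑ j, w t i j ≤ 1)
    (hdyn : ∀ t i, x (t + 1) i =
      x t i + ∑ j ∈ univ.erase i, w t i j * |x t j| * (Real.sign (x t j) - x t i))
    (Bs : Fin m → Finset (Fin n))
    (hdisj : ∀ k l : Fin m, k ≠ l → Disjoint (Bs k) (Bs l))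
    (hBcard : ∀ k, 1 < (Bs k).card)
    (hconn : ∀ k, ∀ i ∈ Bs k,
      Tendsto (fun T => ∑ t ∈ Finset.range T, ∑ j ∈ Bs k, w t i j) atTop atTop)
    (γ : Fin m → ℝ) (hγ : ∀ k, 3 + 2 * Real.sqrt 2 < γ k)
    (hbubble : ∀ k, ∀ t, ∀ i ∈ Bs k,
      γ k * ∑ j ∈ (Bs k)ᶜ, w t i j ≤ ∑ j ∈ Bs k, w t i j)
    (α₁ α₂ : Fin m → ℝ) (hα₁pos : ∀ k, 0 < α₁ k) (hα₁α₂ : ∀ k, α₁ k < α₂ k)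
    (hsol₁ : ∀ k, (1 + α₁ k) / (α₁ k * (1 - α₁ k)) = γ k)
    (hsol₂ : ∀ k, (1 + α₂ k) / (α₂ k * (1 - α₂ k)) = γ k)
    (s : Fin m → ℝ) (hs : ∀ k, s k = 1 ∨ s k = -1)
    (t₀ : Fin m → ℕ)
    (hinit : ∀ k,
      (s k = 1 → ∀ i ∈ Bs k, α₁ k < x (t₀ k) i) ∧
      (s k = -1 → ∀ i ∈ Bs k, x (t₀ k) i < -(α₁ k))) :
    ∀ k,
      (s k = 1 → ∀ i ∈ Bs k, α₂ k ≤ Filter.liminf (fun t => x t i) atTop) ∧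
      (s k = -1 → ∀ i ∈ Bs k, Filter.limsup (fun t => x t i) atTop ≤ -(α₂ k)) := by
  intro k
  have hγpos : 0 < γ k := lt_trans (by positivity) (hγ k)
  have hd₁ : α₁ k * (1 - α₁ k) ≠ 0 := by
    intro h
    have h1 := hsol₁ k
    rw [h, div_zero] at h1
    rw [← h1] at hγpos
    exact lt_irrefl _ hγpos
  have hd₂ : α₂ k * (1 - α₂ k) ≠ 0 := by
    intro h
    have := hsol₂ k
    rw [h, div_zero] at this
    rw [← this] at hγpos
    exact lt_irrefl _ hγpos
  have e₁ : 1 + α₁ k = γ k * (α₁ k * (1 - α₁ k)) := by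
    have := hsol₁ k
    rw [div_eq_iff hd₁] at this
    linarith
  have e₂ : 1 + α₂ k = γ k * (α₂ k * (1 - α₂ k)) := by
    have := hsol₂ k
    rw [div_eq_iff hd₂] at this
    linarith
  have hBne : (Bs k).Nonempty := Finset.card_pos.mp (lt_trans one_pos (hBcard k))
  constructor
  · intro hp i hi
    have hev := bubble_pos x w hx hw0 hwdiag hwsum hdyn (Bs k) hBne (hconn k)
      (γ k) hγpos (hbubble k) (α₁ k) (α₂ k) (hα₁pos k) (hα₁α₂ k) e₁ e₂ (t₀ k)
      ((hinit k).1 hp)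
    have hbd : IsBoundedUnder (· ≤ ·) atTop (fun t => x t i) :=
      ⟨1, Filter.eventually_map.2 (Filter.Eventually.of_forall fun t => (hx t i).2)⟩
    have hcb := hbd.isCoboundedUnder_ge
    have hlim : ∀ ε > (0:ℝ), α₂ k - ε ≤ Filter.liminf (fun t => x t i) atTop := by
      intro ε hε
      obtain ⟨T, hT⟩ := hev ε hε
      exact le_liminf_of_le hcb (eventually_atTop.2 ⟨T, fun t ht => hT t ht i hi⟩)
    by_contra h
    push_neg at h
    have := hlim ((α₂ k - Filter.liminf (fun t => x t i) atTop) / 2) (by linarith)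
    linarith
  · intro hp i hi
    have hy : ∀ t i, -(x t i) ∈ Set.Icc (-1 : ℝ) 1 := by
      intro t i
      exact ⟨by linarith [(hx t i).2], by linarith [(hx t i).1]⟩
    have hdyn' : ∀ t i, -(x (t + 1) i) =
        -(x t i) + ∑ j ∈ univ.erase i,
          w t i j * |-(x t j)| * (Real.sign (-(x t j)) - -(x t i)) := by
      intro t i
      have hneg : ∑ j ∈ univ.erase i,
          w t i j * |-(x t j)| * (Real.sign (-(x t j)) - -(x t i))
          = -∑ j ∈ univ.erase i, w t i j * |x t j| * (Real.sign (x t j) - x t i) := by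
        rw [← Finset.sum_neg_distrib]
        exact Finset.sum_congr rfl fun j _ => by rw [abs_neg, Real.sign_neg]; ring
      rw [hneg, hdyn t i]; ring
    have hinit' : ∀ i ∈ Bs k, α₁ k < -(x (t₀ k) i) := by
      intro j hj
      have := (hinit k).2 hp j hj
      linarith
    have hev := bubble_pos (fun t i => -(x t i)) w hy hw0 hwdiag hwsum hdyn' (Bs k) hBne
      (hconn k) (γ k) hγpos (hbubble k) (α₁ k) (α₂ k) (hα₁pos k) (hα₁α₂ k) e₁ e₂ (t₀ k)
      hinit'
    have hbd : IsBoundedUnder (· ≥ ·) atTop (fun t => x t i) :=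
      ⟨-1, Filter.eventually_map.2 (Filter.Eventually.of_forall fun t => (hx t i).1)⟩
    have hcb := hbd.isCoboundedUnder_le
    have hlim : ∀ ε > (0:ℝ), Filter.limsup (fun t => x t i) atTop ≤ -(α₂ k) + ε := by
      intro ε hε
      obtain ⟨T, hT⟩ := hev ε hε
      refine limsup_le_of_le hcb (eventually_atTop.2 ⟨T, fun t ht => ?_⟩)
      have := hT t ht i hi
      linarith
    by_contra h
    push_neg at h
    have := hlim ((Filter.limsup (fun t => x t i) atTop - -(α₂ k)) / 2) (by linarith)
    linarith
end
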